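/- arXiv:1306.2181 — 7 statements merged into one kernel-verified Lean document; each statement's English description precedes it below -/
import Mathlib

section
/- Let E be a finite-dimensional subspace of a field K containing a field k, and v a valuation on K trivial on k whose residue field is algebraic over k (transcendence degree 0). Then the set of values {v(e) : e ∈ E, e ≠ 0} has cardinality exactly dim_k E. -/
section Aux

variable {k K : Type*} [Field k] [Field K] [Algebra k K]

lemma v_one (v : K → ℝ) (hmul : ∀ x y : K, x ≠ 0 → y ≠ 0 → v (x * y) = v x + v y) :
    v 1 = 0 := by
  have := hmul 1 1 one_ne_zero one_ne_zero
  simp at this; linarith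

lemma v_neg (v : K → ℝ) (hmul : ∀ x y : K, x ≠ 0 → y ≠ 0 → v (x * y) = v x + v y)
    {x : K} (hx : x ≠ 0) : v (-x) = v x := by
  have hm1 : v (-1 : K) = 0 := by
    have := hmul (-1) (-1) (by norm_num) (by norm_num)
    simp [v_one v hmul] at this; linarith
  have := hmul (-1) x (by norm_num) hx
  simpa [hm1] using this

lemma v_add_lt (v : K → ℝ) (hmul : ∀ x y : K, x ≠ 0 → y ≠ 0 → v (x * y) = v x + v y)
    (haddv : ∀ x y : K, x ≠ 0 → y ≠ 0 → x + y ≠ 0 → min (v x) (v y) ≤ v (x + y))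
    {x y : K} (hx : x ≠ 0) (hy : y ≠ 0) (hlt : v x < v y) :
    x + y ≠ 0 ∧ v (x + y) = v x := by
  have hne : x + y ≠ 0 := by
    intro h
    have : y = -x := by linear_combination h
    rw [this, v_neg v hmul hx] at hlt; linarith
  refine ⟨hne, ?_⟩
  have h1 : min (v x) (v y) ≤ v (x + y) := haddv x y hx hy hne
  have h2 : min (v (x + y)) (v (-y)) ≤ v x := by
    have := haddv (x + y) (-y) hne (neg_ne_zero.mpr hy) (by simpa using hx)
    simpa using this
  rw [v_neg v hmul hy] at h2
  have := min_le_iff.mp h2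
  rw [min_eq_left hlt.le] at h1
  rcases this with h | h
  · linarith
  · linarith

lemma v_add_ne (v : K → ℝ) (hmul : ∀ x y : K, x ≠ 0 → y ≠ 0 → v (x * y) = v x + v y)
    (haddv : ∀ x y : K, x ≠ 0 → y ≠ 0 → x + y ≠ 0 → min (v x) (v y) ≤ v (x + y))
    {x y : K} (hx : x ≠ 0) (hy : y ≠ 0) (hne : v x ≠ v y) :
    x + y ≠ 0 ∧ v (x + y) = min (v x) (v y) := by
  rcases lt_or_gt_of_ne hne with h | h
  · have := v_add_lt v hmul haddv hx hy h
    rw [min_eq_left h.le]; exact this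
  · have := v_add_lt v hmul haddv hy hx h
    rw [min_eq_right h.le, add_comm]; exact this

lemma sum_val (v : K → ℝ) (hmul : ∀ x y : K, x ≠ 0 → y ≠ 0 → v (x * y) = v x + v y)
    (haddv : ∀ x y : K, x ≠ 0 → y ≠ 0 → x + y ≠ 0 → min (v x) (v y) ≤ v (x + y))
    (T : Finset ℝ) (x : ℝ → K) (hx : ∀ t ∈ T, x t ≠ 0 ∧ v (x t) = t)
    (hT : T.Nonempty) :
    (∑ t ∈ T, x t) ≠ 0 ∧ v (∑ t ∈ T, x t) ∈ T := by
  induction T using Finset.cons_induction with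
  | empty => exact absurd hT Finset.not_nonempty_empty
  | cons a s ha ih =>
    rcases s.eq_empty_or_nonempty with rfl | hs
    · simp only [Finset.sum_cons, Finset.sum_empty, add_zero]
      have := hx a (Finset.mem_cons_self a _)
      exact ⟨this.1, by rw [this.2]; exact Finset.mem_cons_self a _⟩
    · have ih' := ih (fun t ht => hx t (Finset.mem_cons_of_mem ht)) hs
      have hxa := hx a (Finset.mem_cons_self a _)
      have hvne : v (x a) ≠ v (∑ t ∈ s, x t) := by
        rw [hxa.2]
        intro h
        exact ha (h ▸ ih'.2)
      have := v_add_ne v hmul haddv hxa.1 ih'.1 hvne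
      rw [Finset.sum_cons]
      refine ⟨this.1, ?_⟩
      rw [this.2]
      rcases min_choice (v (x a)) (v (∑ t ∈ s, x t)) with h | h
      · rw [h, hxa.2]; exact Finset.mem_cons_self a _
      · rw [h]; exact Finset.mem_cons_of_mem ih'.2

lemma card_le_finrank (v : K → ℝ)
    (hmul : ∀ x y : K, x ≠ 0 → y ≠ 0 → v (x * y) = v x + v y)
    (haddv : ∀ x y : K, x ≠ 0 → y ≠ 0 → x + y ≠ 0 → min (v x) (v y) ≤ v (x + y))
    (htriv : ∀ c : k, c ≠ 0 → v (algebraMap k K c) = 0)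
    (E : Submodule k K) [FiniteDimensional k E] (T : Finset ℝ) (x : ℝ → K)
    (hx : ∀ t ∈ T, x t ∈ E ∧ x t ≠ 0 ∧ v (x t) = t) :
    T.card ≤ Module.finrank k E := by
  classical
  have hli : LinearIndependent k (fun i : {t // t ∈ T} => (⟨x i.1, (hx i.1 i.2).1⟩ : E)) := by
    rw [Fintype.linearIndependent_iff]
    intro g hg
    by_contra hcon
    push_neg at hcon
    obtain ⟨i0, hi0⟩ := hcon
    set g' : ℝ → k := fun t => if h : t ∈ T then g ⟨t, h⟩ else 0 with hg'
    have hgK : ∑ t ∈ T, g' t • x t = 0 := by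
      have := congrArg (Subtype.val : E → K) hg
      push_cast at this
      rw [← Finset.sum_coe_sort T (fun t => g' t • x t)]
      rw [show (∑ i : {t // t ∈ T}, g' i.1 • x i.1) = ∑ i : {t // t ∈ T}, g i • x i.1 from
        Finset.sum_congr rfl (fun i _ => by simp [hg'])]
      simpa using this
    set T' : Finset ℝ := T.filter (fun t => g' t ≠ 0) with hT'
    have hsum : ∑ t ∈ T', g' t • x t = 0 := by
      rw [hT', Finset.sum_filter_of_ne (fun t _ h => by
        intro hgz; apply h; rw [hgz, zero_smul])]
      exact hgK
    have hT'ne : T'.Nonempty := ⟨i0.1, by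
      rw [hT', Finset.mem_filter]
      exact ⟨i0.2, by simp [hg', i0.2, hi0]⟩⟩
    have := sum_val v hmul haddv T' (fun t => g' t • x t) (fun t ht => by
      rw [hT', Finset.mem_filter] at ht
      have hxt := hx t ht.1
      constructor
      · exact smul_ne_zero ht.2 hxt.2.1
      · show v (g' t • x t) = t
        rw [Algebra.smul_def, hmul _ _ ((map_ne_zero _).mpr ht.2) hxt.2.1,
          htriv _ ht.2, hxt.2.2, zero_add]) hT'ne
    exact this.1 hsum
  have := hli.fintype_card_le_finrank
  simpa using this

lemma S_finite (v : K → ℝ)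
    (hmul : ∀ x y : K, x ≠ 0 → y ≠ 0 → v (x * y) = v x + v y)
    (haddv : ∀ x y : K, x ≠ 0 → y ≠ 0 → x + y ≠ 0 → min (v x) (v y) ≤ v (x + y))
    (htriv : ∀ c : k, c ≠ 0 → v (algebraMap k K c) = 0)
    (E : Submodule k K) [FiniteDimensional k E] :
    (v '' {s : K | s ∈ E ∧ s ≠ 0}).Finite ∧
      (v '' {s : K | s ∈ E ∧ s ≠ 0}).ncard ≤ Module.finrank k E := by
  classical
  set S := v '' {s : K | s ∈ E ∧ s ≠ 0} with hS
  set x : ℝ → K := fun t =>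
    if h : ∃ s : K, (s ∈ E ∧ s ≠ 0) ∧ v s = t then h.choose else 0 with hxdef
  have hxprop : ∀ t ∈ S, x t ∈ E ∧ x t ≠ 0 ∧ v (x t) = t := by
    intro t ht
    obtain ⟨s, hs, hvs⟩ := ht
    have h : ∃ s : K, (s ∈ E ∧ s ≠ 0) ∧ v s = t := ⟨s, hs, hvs⟩
    rw [hxdef]
    simp only [dif_pos h]
    exact ⟨h.choose_spec.1.1, h.choose_spec.1.2, h.choose_spec.2⟩
  have hcard : ∀ T : Finset ℝ, ↑T ⊆ S → T.card ≤ Module.finrank k E := by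
    intro T hT
    exact card_le_finrank v hmul haddv htriv E T x (fun t ht => hxprop t (hT ht))
  have hfin : S.Finite := by
    by_contra h
    obtain ⟨T, hTsub, hTcard⟩ :=
      Set.Infinite.exists_subset_card_eq h (Module.finrank k E + 1)
    have := hcard T hTsub
    omega
  refine ⟨hfin, ?_⟩
  rw [Set.ncard_eq_toFinset_card S hfin]
  exact hcard hfin.toFinset (by simp)

end Aux

section Main

variable {k K : Type*} [Field k] [Field K] [Algebra k K]

def Wsub (v : K → ℝ) (hmul : ∀ x y : K, x ≠ 0 → y ≠ 0 → v (x * y) = v x + v y)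
    (haddv : ∀ x y : K, x ≠ 0 → y ≠ 0 → x + y ≠ 0 → min (v x) (v y) ≤ v (x + y))
    (htriv : ∀ c : k, c ≠ 0 → v (algebraMap k K c) = 0)
    (E : Submodule k K) (t : ℝ) : Submodule k K where
  carrier := {x : K | x ∈ E ∧ (x = 0 ∨ t < v x)}
  zero_mem' := ⟨E.zero_mem, Or.inl rfl⟩
  add_mem' := by
    rintro a b ⟨haE, ha⟩ ⟨hbE, hb⟩
    refine ⟨E.add_mem haE hbE, ?_⟩
    by_cases ha0 : a = 0
    · subst ha0; rw [zero_add]; exact hb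
    by_cases hb0 : b = 0
    · subst hb0; rw [add_zero]; exact ha
    have hva : t < v a := ha.resolve_left ha0
    have hvb : t < v b := hb.resolve_left hb0
    by_cases hab : a + b = 0
    · exact Or.inl hab
    · exact Or.inr (lt_of_lt_of_le (lt_min hva hvb) (haddv a b ha0 hb0 hab))
  smul_mem' := by
    rintro c x ⟨hxE, hx⟩
    refine ⟨E.smul_mem c hxE, ?_⟩
    by_cases hc : c = 0
    · simp [hc]
    by_cases hx0 : x = 0
    · subst hx0; simp
    have hvx : t < v x := hx.resolve_left hx0
    refine Or.inr ?_
    have : v (c • x) = v x := by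
      rw [Algebra.smul_def, hmul _ _ ((map_ne_zero _).mpr hc) hx0, htriv c hc, zero_add]
    rw [this]; exact hvx

lemma ge_aux (v : K → ℝ)
    (hmul : ∀ x y : K, x ≠ 0 → y ≠ 0 → v (x * y) = v x + v y)
    (haddv : ∀ x y : K, x ≠ 0 → y ≠ 0 → x + y ≠ 0 → min (v x) (v y) ≤ v (x + y))
    (htriv : ∀ c : k, c ≠ 0 → v (algebraMap k K c) = 0)
    (hres : ∀ x : K, x ≠ 0 → v x = 0 →
      ∃ c : k, c ≠ 0 ∧ (x - algebraMap k K c = 0 ∨ 0 < v (x - algebraMap k K c))) :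
    ∀ (n : ℕ) (E : Submodule k K) (_ : FiniteDimensional k E),
      Module.finrank k E ≤ n →
      Module.finrank k E ≤ (v '' {s : K | s ∈ E ∧ s ≠ 0}).ncard := by
  intro n
  induction n with
  | zero => intro E _ h; omega
  | succ n ih =>
    intro E instE h
    by_cases h0 : Module.finrank k E = 0
    · omega
    have hfin := (S_finite v hmul haddv htriv E).1
    have hEbot : E ≠ ⊥ := by
      intro hb
      rw [hb] at h0
      exact h0 (finrank_bot k K)
    obtain ⟨y, hyE, hy0⟩ := Submodule.exists_mem_ne_zero_of_ne_bot hEbot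
    have hne : (v '' {s : K | s ∈ E ∧ s ≠ 0}).Nonempty := ⟨v y, y, ⟨hyE, hy0⟩, rfl⟩
    obtain ⟨t, htS, htmin⟩ := Set.exists_min_image _ id hfin hne
    simp only [id] at htmin
    obtain ⟨x0, ⟨hx0E, hx0ne⟩, hvx0⟩ := htS
    set W := Wsub v hmul haddv htriv E t with hW
    have hWle : W ≤ E := fun x hx => hx.1
    have instW : FiniteDimensional k W := Submodule.finiteDimensional_of_le hWle
    have hx0W : x0 ∉ W := by
      rintro ⟨-, h | h⟩
      · exact hx0ne h
      · rw [hvx0] at h; exact lt_irrefl t h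
    have hWlt : W < E := hWle.lt_of_ne fun hEq => hx0W (by rw [hEq]; exact hx0E)
    have hfr : Module.finrank k W < Module.finrank k E :=
      Submodule.finrank_lt_finrank_of_lt hWlt
    -- E ≤ W ⊔ span {x0}
    have hvinv : v x0⁻¹ = -t := by
      have := hmul x0 x0⁻¹ hx0ne (inv_ne_zero hx0ne)
      rw [mul_inv_cancel₀ hx0ne, v_one v hmul, hvx0] at this
      linarith
    have hsup : E ≤ W ⊔ Submodule.span k {x0} := by
      intro y hy
      by_cases hy0 : y = 0
      · rw [hy0]; exact Submodule.zero_mem _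
      have hty : t ≤ v y := htmin (v y) ⟨y, ⟨hy, hy0⟩, rfl⟩
      rcases eq_or_lt_of_le hty with heq | hlt
      · -- v y = t : reduce by a constant
        have hz0 : y * x0⁻¹ ≠ 0 := mul_ne_zero hy0 (inv_ne_zero hx0ne)
        have hvz : v (y * x0⁻¹) = 0 := by
          rw [hmul y x0⁻¹ hy0 (inv_ne_zero hx0ne), hvinv, ← heq]; ring
        obtain ⟨c, hc, hcase⟩ := hres _ hz0 hvz
        have hkey : y - c • x0 = (y * x0⁻¹ - algebraMap k K c) * x0 := by
          rw [Algebra.smul_def, sub_mul, mul_assoc, inv_mul_cancel₀ hx0ne, mul_one]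
        by_cases hzc : y * x0⁻¹ - algebraMap k K c = 0
        · -- y = c • x0 ∈ span
          have : y = c • x0 := by
            have h' : y - c • x0 = 0 := by rw [hkey, hzc, zero_mul]
            exact sub_eq_zero.mp h'
          rw [this]
          exact Submodule.mem_sup_right
            (Submodule.smul_mem _ c (Submodule.mem_span_singleton_self x0))
        · have hpos : 0 < v (y * x0⁻¹ - algebraMap k K c) := by
            rcases hcase with h | h
            · exact absurd h hzc
            · exact h
          have hmem : y - c • x0 ∈ W := by
            refine ⟨E.sub_mem hy (E.smul_mem c hx0E), Or.inr ?_⟩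
            rw [hkey, hmul _ _ hzc hx0ne, hvx0]
            linarith
          have : y = (y - c • x0) + c • x0 := by ring
          rw [this]
          exact Submodule.add_mem _ (Submodule.mem_sup_left hmem)
            (Submodule.mem_sup_right
              (Submodule.smul_mem _ c (Submodule.mem_span_singleton_self x0)))
      · exact Submodule.mem_sup_left ⟨hy, Or.inr hlt⟩
    have instSpan : FiniteDimensional k (Submodule.span k {x0}) := inferInstance
    have hfr2 : Module.finrank k E ≤ Module.finrank k W + 1 := by
      have h1 : Module.finrank k E ≤ Module.finrank k (W ⊔ Submodule.span k {x0} : Submodule k K) :=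
        Submodule.finrank_mono hsup
      have h2 := Submodule.finrank_sup_add_finrank_inf_eq W (Submodule.span k {x0})
      have h3 : Module.finrank k (Submodule.span k {x0}) = 1 :=
        finrank_span_singleton hx0ne
      omega
    -- count values
    set SW := v '' {s : K | s ∈ W ∧ s ≠ 0} with hSW
    have hSWsub : SW ⊆ v '' {s : K | s ∈ E ∧ s ≠ 0} := by
      rintro r ⟨s, ⟨hsW, hs0⟩, rfl⟩
      exact ⟨s, ⟨hWle hsW, hs0⟩, rfl⟩
    have hSWfin : SW.Finite := hfin.subset hSWsub
    have htSW : t ∉ SW := by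
      rintro ⟨s, ⟨⟨-, hs⟩, hs0⟩, hvs⟩
      rcases hs with rfl | hs
      · exact hs0 rfl
      · rw [hvs] at hs; exact lt_irrefl t hs
    have hinsert : insert t SW ⊆ v '' {s : K | s ∈ E ∧ s ≠ 0} := by
      rintro r (rfl | hr)
      · exact ⟨x0, ⟨hx0E, hx0ne⟩, hvx0⟩
      · exact hSWsub hr
    have hihW : Module.finrank k W ≤ SW.ncard := ih W instW (by omega)
    calc Module.finrank k E ≤ Module.finrank k W + 1 := hfr2
      _ ≤ SW.ncard + 1 := by omega
      _ = (insert t SW).ncard := (Set.ncard_insert_of_notMem htSW hSWfin).symm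
      _ ≤ _ := Set.ncard_le_ncard hinsert hfin

end Main

/-- if `v` is a real valuation on `K/k` (`k` algebraically closed), trivial
on `k`, whose residue field is algebraic over `k` (equivalently, every `v`-unit is
congruent to a nonzero constant of `k` modulo `{v > 0}`), then for every
finite-dimensional `k`-subspace `E ⊆ K` the set of values of `v` on `E ∖ {0}` has
cardinality exactly `dim_k E`. -/
theorem stmt_3 {k K : Type*} [Field k] [IsAlgClosed k] [Field K] [Algebra k K]
    (v : K → ℝ)
    (hmul : ∀ x y : K, x ≠ 0 → y ≠ 0 → v (x * y) = v x + v y)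
    (haddv : ∀ x y : K, x ≠ 0 → y ≠ 0 → x + y ≠ 0 → min (v x) (v y) ≤ v (x + y))
    (htriv : ∀ c : k, c ≠ 0 → v (algebraMap k K c) = 0)
    (hres : ∀ x : K, x ≠ 0 → v x = 0 →
      ∃ c : k, c ≠ 0 ∧ (x - algebraMap k K c = 0 ∨ 0 < v (x - algebraMap k K c)))
    (E : Submodule k K) [FiniteDimensional k E] :
    (v '' {s : K | s ∈ E ∧ s ≠ 0}).ncard = Module.finrank k E := by
  refine le_antisymm (S_finite v hmul haddv htriv E).2 ?_
  exact ge_aux v hmul haddv htriv hres (Module.finrank k E) E inferInstance le_rfl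
end

section
/- Let α ∈ N¹(X)_ℚ be a rational numerical divisor class on a projective variety X. Then every effective ℝ-Cartier ℝ-divisor D numerically equivalent to α can be written as a convex combination of effective ℚ-Cartier ℚ-divisors numerically equivalent to α. -/
open Finset Submodule

/-- A real vector is "rational" if every coordinate is a rational number. -/
def RatV {ι : Type*} (x : ι → ℝ) : Prop := ∀ i, ∃ q : ℚ, x i = (q : ℝ)

section RatVLemmas

variable {ι : Type*}

lemma ratV_add {x y : ι → ℝ} (hx : RatV x) (hy : RatV y) : RatV (x + y) := fun i => by
  obtain ⟨a, ha⟩ := hx i; obtain ⟨b, hb⟩ := hy i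
  exact ⟨a + b, by simp [ha, hb]⟩

lemma ratV_sub {x y : ι → ℝ} (hx : RatV x) (hy : RatV y) : RatV (x - y) := fun i => by
  obtain ⟨a, ha⟩ := hx i; obtain ⟨b, hb⟩ := hy i
  exact ⟨a - b, by simp [ha, hb]⟩

lemma ratV_smul {a : ℝ} (ha : ∃ q : ℚ, a = (q : ℝ)) {x : ι → ℝ} (hx : RatV x) :
    RatV (a • x) := fun i => by
  obtain ⟨b, hb⟩ := ha; obtain ⟨c, hc⟩ := hx i
  exact ⟨b * c, by simp [hb, hc]⟩

lemma ratV_single [DecidableEq ι] (i₀ : ι) : RatV (Pi.single i₀ (1 : ℝ)) := fun i => by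
  rcases eq_or_ne i i₀ with h | h
  · subst h; exact ⟨1, by simp⟩
  · exact ⟨0, by simp [Pi.single_apply, h]⟩

lemma exists_rat_sum {n : Type*} (s : Finset n) (f : n → ℝ)
    (hf : ∀ t ∈ s, ∃ q : ℚ, f t = (q : ℝ)) : ∃ q : ℚ, (∑ t ∈ s, f t) = (q : ℝ) := by
  classical
  choose q hq using hf
  refine ⟨∑ t ∈ s.attach, q t t.2, ?_⟩
  rw [← Finset.sum_attach s f]
  push_cast
  exact Finset.sum_congr rfl fun t _ => hq t t.2

end RatVLemmas

section Induction

variable {ι : Type*} [Fintype ι]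

lemma pi_eq_sum_single [DecidableEq ι] (x : ι → ℝ) :
    x = ∑ i, x i • (Pi.single i 1 : ι → ℝ) := by
  have h := Finset.univ_sum_single x
  rw [← h]
  refine Finset.sum_congr rfl fun i _ => ?_
  ext j
  simp [Pi.single_apply]

/-- A rational linear system which is solvable over ℝ has a rational solution. -/
lemma rat_solution : ∀ (d : ℕ) (f : (ι → ℝ) →ₗ[ℝ] (Fin d → ℝ)),
    (∀ x, RatV x → RatV (f x)) → ∀ b : Fin d → ℝ, RatV b → (∃ x, f x = b) →
    ∃ x₀, RatV x₀ ∧ f x₀ = b := by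
  intro d
  induction d with
  | zero =>
    intro f _ b _ _
    exact ⟨0, fun i => ⟨0, by simp⟩, Subsingleton.elim _ _⟩
  | succ d ih =>
    classical
    intro f hf b hb hsol
    obtain ⟨x, hxb⟩ := hsol
    set g : (ι → ℝ) →ₗ[ℝ] (Fin d → ℝ) := (LinearMap.funLeft ℝ ℝ Fin.succ).comp f with hg
    have hgapp : ∀ y j, g y j = f y j.succ := fun y j => rfl
    by_cases hc : ∃ i, f (Pi.single i (1:ℝ)) 0 ≠ 0
    · obtain ⟨i₀, hi₀⟩ := hc
      set c : ℝ := f (Pi.single i₀ (1:ℝ)) 0 with hcdef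
      obtain ⟨qc, hqc⟩ := hf (Pi.single i₀ (1:ℝ)) (ratV_single i₀) 0
      have hqc' : c = (qc : ℝ) := hqc
      set P : (ι → ℝ) →ₗ[ℝ] (ι → ℝ) :=
        LinearMap.id - (LinearMap.toSpanSingleton ℝ (ι → ℝ) (Pi.single i₀ (1:ℝ))).comp
          (c⁻¹ • (LinearMap.proj 0).comp f) with hPdef
      have hP : ∀ y, P y = y - (c⁻¹ * f y 0) • (Pi.single i₀ 1 : ι → ℝ) := fun y => by
        simp [hPdef, LinearMap.toSpanSingleton_apply, smul_eq_mul]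
      have hPf0 : ∀ y, f (P y) 0 = 0 := by
        intro y
        rw [hP, map_sub, map_smul]
        simp only [Pi.sub_apply, Pi.smul_apply, smul_eq_mul, ← hcdef]
        rw [mul_comm (c⁻¹) (f y 0), mul_assoc, inv_mul_cancel₀ hi₀, mul_one, sub_self]
      have hPrat : ∀ y, RatV y → RatV (P y) := by
        intro y hy
        rw [hP]
        obtain ⟨qf, hqf⟩ := hf y hy 0
        exact ratV_sub hy (ratV_smul ⟨qc⁻¹ * qf, by rw [hqc', hqf]; push_cast; ring⟩
          (ratV_single i₀))
      set t : ℝ := c⁻¹ * b 0 with htdef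
      have htrat : ∃ q : ℚ, t = (q : ℝ) := by
        obtain ⟨qb, hqb⟩ := hb 0
        exact ⟨qc⁻¹ * qb, by rw [htdef, hqc', hqb]; push_cast; ring⟩
      have htvrat : RatV (t • (Pi.single i₀ 1 : ι → ℝ)) := ratV_smul htrat (ratV_single i₀)
      set b' : Fin d → ℝ := (fun j => b j.succ) - g (t • (Pi.single i₀ 1 : ι → ℝ)) with hb'def
      have hb'rat : RatV b' := by
        intro j
        obtain ⟨q1, hq1⟩ := hb j.succ
        obtain ⟨q2, hq2⟩ := hf _ htvrat j.succ
        refine ⟨q1 - q2, ?_⟩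
        have : b' j = b j.succ - f (t • (Pi.single i₀ 1 : ι → ℝ)) j.succ := rfl
        rw [this, hq1, hq2]; push_cast; ring
      have hfx0 : f x 0 = b 0 := by rw [hxb]
      have hPx : P x = x - t • (Pi.single i₀ 1 : ι → ℝ) := by rw [hP, hfx0]
      have hsol' : (g.comp P) x = b' := by
        rw [LinearMap.comp_apply, hPx, map_sub, hb'def]
        congr 1
        ext j
        rw [hgapp, hxb]
      obtain ⟨w₀, hw₀rat, hw₀⟩ := ih (g.comp P)
        (fun y hy j => hf (P y) (hPrat y hy) j.succ) b' hb'rat ⟨x, hsol'⟩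
      refine ⟨t • (Pi.single i₀ 1 : ι → ℝ) + P w₀, ratV_add htvrat (hPrat w₀ hw₀rat),
        funext fun j => ?_⟩
      rw [map_add]
      refine Fin.cases ?_ (fun j => ?_) j
      · rw [Pi.add_apply, hPf0, add_zero, map_smul]
        simp only [Pi.smul_apply, smul_eq_mul, ← hcdef]
        rw [htdef, mul_comm (c⁻¹) (b 0), mul_assoc, inv_mul_cancel₀ hi₀, mul_one]
      · have h1 := congrFun hw₀ j
        rw [LinearMap.comp_apply, hgapp] at h1
        have h2 : b' j = b j.succ - f (t • (Pi.single i₀ 1 : ι → ℝ)) j.succ := rfl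
        rw [Pi.add_apply, h1, h2]
        ring
    · push_neg at hc
      have hf0 : ∀ y : ι → ℝ, f y 0 = 0 := by
        intro y
        conv_lhs => rw [pi_eq_sum_single y]
        rw [map_sum]
        simp only [map_smul, Finset.sum_apply, Pi.smul_apply, smul_eq_mul]
        exact Finset.sum_eq_zero fun i _ => by rw [hc i, mul_zero]
      have hb0 : b 0 = 0 := by rw [← hxb, hf0]
      obtain ⟨x₀, hx₀rat, hx₀⟩ := ih g (fun y hy j => hf y hy j.succ)
        (fun j => b j.succ) (fun j => hb j.succ) ⟨x, funext fun j => by rw [hgapp, hxb]⟩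
      refine ⟨x₀, hx₀rat, funext fun j => ?_⟩
      refine Fin.cases ?_ (fun j => ?_) j
      · rw [hf0, hb0]
      · exact congrFun hx₀ j

/-- The real kernel of a rational linear map is spanned by its rational kernel vectors. -/
lemma ker_rat_span : ∀ (d : ℕ) (f : (ι → ℝ) →ₗ[ℝ] (Fin d → ℝ)),
    (∀ x, RatV x → RatV (f x)) → ∀ x, f x = 0 →
    x ∈ Submodule.span ℝ {y : ι → ℝ | RatV y ∧ f y = 0} := by
  intro d
  induction d with
  | zero =>
    classical
    intro f _ x _
    rw [pi_eq_sum_single x]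
    exact Submodule.sum_mem _ fun i _ => Submodule.smul_mem _ _
      (Submodule.subset_span ⟨ratV_single i, Subsingleton.elim _ _⟩)
  | succ d ih =>
    classical
    intro f hf x hx
    set g : (ι → ℝ) →ₗ[ℝ] (Fin d → ℝ) := (LinearMap.funLeft ℝ ℝ Fin.succ).comp f with hg
    have hgapp : ∀ y j, g y j = f y j.succ := fun y j => rfl
    by_cases hc : ∃ i, f (Pi.single i (1:ℝ)) 0 ≠ 0
    · obtain ⟨i₀, hi₀⟩ := hc
      set c : ℝ := f (Pi.single i₀ (1:ℝ)) 0 with hcdef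
      obtain ⟨qc, hqc⟩ := hf (Pi.single i₀ (1:ℝ)) (ratV_single i₀) 0
      have hqc' : c = (qc : ℝ) := hqc
      set P : (ι → ℝ) →ₗ[ℝ] (ι → ℝ) :=
        LinearMap.id - (LinearMap.toSpanSingleton ℝ (ι → ℝ) (Pi.single i₀ (1:ℝ))).comp
          (c⁻¹ • (LinearMap.proj 0).comp f) with hPdef
      have hP : ∀ y, P y = y - (c⁻¹ * f y 0) • (Pi.single i₀ 1 : ι → ℝ) := fun y => by
        simp [hPdef, LinearMap.toSpanSingleton_apply, smul_eq_mul]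
      have hPf0 : ∀ y, f (P y) 0 = 0 := by
        intro y
        rw [hP, map_sub, map_smul]
        simp only [Pi.sub_apply, Pi.smul_apply, smul_eq_mul, ← hcdef]
        rw [mul_comm (c⁻¹) (f y 0), mul_assoc, inv_mul_cancel₀ hi₀, mul_one, sub_self]
      have hPrat : ∀ y, RatV y → RatV (P y) := by
        intro y hy
        rw [hP]
        obtain ⟨qf, hqf⟩ := hf y hy 0
        exact ratV_sub hy (ratV_smul ⟨qc⁻¹ * qf, by rw [hqc', hqf]; push_cast; ring⟩
          (ratV_single i₀))
      have hfx0 : f x 0 = 0 := by rw [hx]; rfl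
      have hPx : P x = x := by rw [hP, hfx0]; simp
      have hker : (g.comp P) x = 0 := by
        ext j
        rw [LinearMap.comp_apply, hPx, hgapp, hx]
        rfl
      have hspan := ih (g.comp P)
        (fun y hy j => hf (P y) (hPrat y hy) j.succ) x hker
      have hPmem := Submodule.apply_mem_span_image_of_mem_span P hspan
      rw [hPx] at hPmem
      refine Submodule.span_mono ?_ hPmem
      rintro _ ⟨y, ⟨hyrat, hyker⟩, rfl⟩
      refine ⟨hPrat y hyrat, funext fun j => ?_⟩
      refine Fin.cases ?_ (fun j => ?_) j
      · rw [hPf0]; rfl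
      · have h1 := congrFun hyker j
        rw [LinearMap.comp_apply, hgapp] at h1
        rw [h1]; rfl
    · push_neg at hc
      have hf0 : ∀ y : ι → ℝ, f y 0 = 0 := by
        intro y
        conv_lhs => rw [pi_eq_sum_single y]
        rw [map_sum]
        simp only [map_smul, Finset.sum_apply, Pi.smul_apply, smul_eq_mul]
        exact Finset.sum_eq_zero fun i _ => by rw [hc i, mul_zero]
      have hgx : g x = 0 := funext fun j => by rw [hgapp, hx]; rfl
      refine Submodule.span_mono ?_ (ih g (fun y hy j => hf y hy j.succ) x hgx)
      rintro y ⟨hyrat, hyker⟩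
      refine ⟨hyrat, funext fun j => ?_⟩
      refine Fin.cases ?_ (fun j => ?_) j
      · rw [hf0]; rfl
      · have h1 := congrFun hyker j
        rw [hgapp] at h1
        rw [h1]; rfl

end Induction

/-- let `D` be an effective ℝ-Cartier divisor, written with positive real
coefficients on its (finitely many) irreducible components indexed by `ι`, and let
`Num : ℝ-divisors supported on these components → N¹(X)_ℝ ≃ ℝ^d` be the (rational)
numerical class map, whose class `Num D = α` is rational. Then `D` is a convex
combination of effective ℚ-divisors numerically equivalent to `α`. -/
theorem stmt_6 {ι : Type*} [Fintype ι] (d : ℕ)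
    (Num : (ι → ℝ) →ₗ[ℝ] (Fin d → ℝ))
    (hrat : ∀ x : ι → ℝ, (∀ i, ∃ q : ℚ, x i = (q : ℝ)) →
      ∀ j, ∃ q : ℚ, Num x j = (q : ℝ))
    (D : ι → ℝ) (hD : ∀ i, 0 < D i)
    (hα : ∀ j, ∃ q : ℚ, Num D j = (q : ℝ)) :
    D ∈ convexHull ℝ
      {x : ι → ℝ | (∀ i, 0 ≤ x i) ∧ (∀ i, ∃ q : ℚ, x i = (q : ℝ)) ∧ Num x = Num D} := by
  classical
  rcases isEmpty_or_nonempty ι with hι | hι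
  · exact subset_convexHull ℝ _ ⟨fun i => (hD i).le, fun i => isEmptyElim i, rfl⟩
  obtain ⟨x₀, hx₀rat, hx₀⟩ := rat_solution d Num hrat (Num D) hα ⟨D, rfl⟩
  have hker : D - x₀ ∈ Submodule.span ℝ {y : ι → ℝ | RatV y ∧ Num y = 0} :=
    ker_rat_span d Num hrat _ (by rw [map_sub, hx₀, sub_self])
  rw [mem_span_set'] at hker
  obtain ⟨n, cc, v, hv⟩ := hker
  set V : Fin n → ι → ℝ := fun t => (v t : ι → ℝ) with hV
  have hVprop : ∀ t, RatV (V t) ∧ Num (V t) = 0 := fun t => (v t).2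
  have hv' : ∑ t, cc t • V t = D - x₀ := by simp only [hV]; exact hv
  set A : ℝ := ∑ t, ∑ i, |V t i| with hA
  have hA0 : 0 ≤ A := Finset.sum_nonneg fun t _ => Finset.sum_nonneg fun i _ => abs_nonneg _
  set m : ℝ := Finset.univ.inf' Finset.univ_nonempty D with hm
  have hm0 : 0 < m := by rw [hm, Finset.lt_inf'_iff]; exact fun i _ => hD i
  set δ : ℝ := m / (A + 1) with hδ
  have hδ0 : 0 < δ := div_pos hm0 (by linarith)
  have hδA : ∀ i, δ * (∑ t, |V t i|) ≤ D i := by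
    intro i
    have h1 : (∑ t, |V t i|) ≤ A := Finset.sum_le_sum fun t _ =>
      Finset.single_le_sum (fun j _ => abs_nonneg (V t j)) (Finset.mem_univ i)
    have h2 : δ * A ≤ m := by
      rw [hδ, div_mul_eq_mul_div, div_le_iff₀ (by linarith : (0:ℝ) < A + 1)]
      nlinarith
    have h3 : m ≤ D i := Finset.inf'_le _ (Finset.mem_univ i)
    nlinarith [mul_le_mul_of_nonneg_left h1 hδ0.le]
  have hrat2 : ∀ t, ∃ qa qb : ℚ, (qa:ℝ) ≤ cc t ∧ cc t ≤ (qb:ℝ) ∧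
      cc t - δ ≤ (qa:ℝ) ∧ (qb:ℝ) ≤ cc t + δ := by
    intro t
    obtain ⟨q1, h1, h2⟩ := exists_rat_btwn (show cc t - δ < cc t by linarith)
    obtain ⟨q2, h3, h4⟩ := exists_rat_btwn (show cc t < cc t + δ by linarith)
    exact ⟨q1, q2, h2.le, h3.le, h1.le, h4.le⟩
  choose qa qb hqa hqb hqa' hqb' using hrat2
  set L : (Fin n → ℝ) →ₗ[ℝ] (ι → ℝ) :=
    ∑ t, (LinearMap.toSpanSingleton ℝ (ι → ℝ) (V t)).comp (LinearMap.proj t) with hL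
  have hLapp : ∀ w, L w = ∑ t, w t • V t := by
    intro w
    rw [hL]
    simp [LinearMap.toSpanSingleton_apply]
  set T : (Fin n → ℝ) →ᵃ[ℝ] (ι → ℝ) :=
    { toFun := fun w => x₀ + L w
      linear := L
      map_vadd' := fun p w => by simp only [vadd_eq_add, map_add]; abel } with hT
  have hTapp : ∀ w, T w = x₀ + ∑ t, w t • V t := by
    intro w
    simp only [hT, AffineMap.coe_mk, hLapp]
  have hDT : D = T cc := by rw [hTapp, hv']; abel
  set box : Set (Fin n → ℝ) := Set.univ.pi fun t => {(qa t : ℝ), (qb t : ℝ)} with hbox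
  have hccbox : cc ∈ convexHull ℝ box := by
    refine mem_convexHull_pi fun t _ => ?_
    rw [convexHull_pair, segment_eq_Icc (le_trans (hqa t) (hqb t))]
    exact ⟨hqa t, hqb t⟩
  have hmem : D ∈ convexHull ℝ (T '' box) := by
    rw [← AffineMap.image_convexHull]
    exact ⟨cc, hccbox, hDT.symm⟩
  refine convexHull_mono ?_ hmem
  rintro _ ⟨s, hs, rfl⟩
  have hsδ : ∀ t, |s t - cc t| ≤ δ ∧ ∃ q : ℚ, s t = (q:ℝ) := by
    intro t
    have hst := hs t (Set.mem_univ t)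
    simp only [Set.mem_insert_iff, Set.mem_singleton_iff] at hst
    rcases hst with h | h
    · exact ⟨abs_le.2 ⟨by rw [h]; linarith [hqa' t], by rw [h]; linarith [hqa t]⟩, ⟨qa t, h⟩⟩
    · exact ⟨abs_le.2 ⟨by rw [h]; linarith [hqb t], by rw [h]; linarith [hqb' t]⟩, ⟨qb t, h⟩⟩
  have hTsi : ∀ (w : Fin n → ℝ) i, T w i = x₀ i + ∑ t, w t * V t i := by
    intro w i
    rw [hTapp]
    simp [Finset.sum_apply]
  refine ⟨?_, ?_, ?_⟩
  · intro i
    have hdiff : |(∑ t, s t * V t i) - ∑ t, cc t * V t i| ≤ δ * ∑ t, |V t i| := by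
      rw [← Finset.sum_sub_distrib]
      calc |∑ t, (s t * V t i - cc t * V t i)| ≤ ∑ t, |s t * V t i - cc t * V t i| :=
            Finset.abs_sum_le_sum_abs _ _
        _ ≤ ∑ t, δ * |V t i| := Finset.sum_le_sum fun t _ => by
            rw [← sub_mul, abs_mul]
            exact mul_le_mul_of_nonneg_right (hsδ t).1 (abs_nonneg _)
        _ = δ * ∑ t, |V t i| := by rw [Finset.mul_sum]
    have h4 := hδA i
    have h5 := abs_le.1 hdiff
    have h6 : D i = x₀ i + ∑ t, cc t * V t i := by rw [hDT, hTsi]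
    rw [hTsi]
    linarith [h5.1]
  · intro i
    rw [hTsi]
    obtain ⟨q0, hq0⟩ := hx₀rat i
    obtain ⟨qs, hqs⟩ := exists_rat_sum Finset.univ (fun t => s t * V t i) (fun t _ => by
      obtain ⟨q1, hq1⟩ := (hsδ t).2
      obtain ⟨q2, hq2⟩ := (hVprop t).1 i
      exact ⟨q1 * q2, by show s t * V t i = ((q1 * q2 : ℚ) : ℝ); rw [hq1, hq2]; push_cast; ring⟩)
    exact ⟨q0 + qs, by rw [hq0, hqs]; push_cast; ring⟩
  · rw [hTapp, map_add, map_sum, ← hx₀]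
    have hz : ∀ t ∈ Finset.univ (α := Fin n), Num (s t • V t) = 0 := fun t _ => by
      rw [map_smul, (hVprop t).2, smul_zero]
    rw [Finset.sum_eq_zero hz, add_zero]
end

section
/- Let W be an affine subspace of ℝ^n defined by finitely many linear equations with rational coefficients, and let P = W ∩ (ℝ_{>0})^n be nonempty. Then every point of P is a convex combination of points of P with rational coordinates. -/
open Matrix

/-- Every linear map between vector spaces has a generalized inverse. -/
lemma stmt7_exists_genInv {K V W : Type*} [Field K] [AddCommGroup V] [Module K V]
    [AddCommGroup W] [Module K W] (f : V →ₗ[K] W) :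
    ∃ g : W →ₗ[K] V, ∀ v, f (g (f v)) = f v := by
  obtain ⟨q, hq⟩ := (LinearMap.range f).exists_isCompl
  obtain ⟨h, hh⟩ := f.rangeRestrict.exists_rightInverse_of_surjective
    (LinearMap.range_rangeRestrict f)
  refine ⟨h ∘ₗ (LinearMap.range f).linearProjOfIsCompl q hq, fun v => ?_⟩
  have h1 : ((LinearMap.range f).linearProjOfIsCompl q hq) (f v)
      = ⟨f v, LinearMap.mem_range_self f v⟩ :=
    Submodule.linearProjOfIsCompl_apply_left hq ⟨f v, LinearMap.mem_range_self f v⟩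
  have h2 := congrArg Subtype.val
    (LinearMap.congr_fun hh ⟨f v, LinearMap.mem_range_self f v⟩)
  simp only [LinearMap.coe_comp, Function.comp_apply, LinearMap.id_coe, id_eq] at h2
  simp only [LinearMap.coe_comp, Function.comp_apply, h1]
  calc f (h ⟨f v, LinearMap.mem_range_self f v⟩)
      = (f.rangeRestrict (h ⟨f v, LinearMap.mem_range_self f v⟩) : W) := rfl
    _ = f v := h2

/-- a rational affine subspace `W ⊆ ℝⁿ` (cut out by finitely many linear
equations with rational coefficients) intersected with the open positive orthant has the
property that each of its points is a convex combination of its rational points. -/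
theorem stmt_7 (n k : ℕ) (A : Fin k → Fin n → ℚ) (b : Fin k → ℚ)
    (W : Set (Fin n → ℝ)) (hW : W = {x : Fin n → ℝ | ∀ i, ∑ j, (A i j : ℝ) * x j = (b i : ℝ)})
    (x : Fin n → ℝ) (hxW : x ∈ W) (hxpos : ∀ j, 0 < x j) :
    x ∈ convexHull ℝ
      {y : Fin n → ℝ | y ∈ W ∧ (∀ j, 0 < y j) ∧ ∀ j, ∃ q : ℚ, y j = (q : ℝ)} := by
  classical
  rcases isEmpty_or_nonempty (Fin n) with hempty | hne
  · exact subset_convexHull ℝ _ ⟨hxW, hxpos, fun j => hempty.elim j⟩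
  -- the rational matrix and a rational generalized inverse
  set M : Matrix (Fin k) (Fin n) ℚ := Matrix.of A with hMdef
  obtain ⟨g, hg⟩ := stmt7_exists_genInv M.mulVecLin
  set N : Matrix (Fin n) (Fin k) ℚ := LinearMap.toMatrix' g with hNdef
  have hQ : M * (N * M) = M := by
    have hNg : N.mulVecLin = g := by
      rw [hNdef, ← Matrix.toLin'_apply', Matrix.toLin'_toMatrix']
    have hcomp : (M * (N * M)).mulVecLin = M.mulVecLin := by
      rw [Matrix.mulVecLin_mul, Matrix.mulVecLin_mul, hNg]
      exact LinearMap.ext fun v => hg v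
    simp only [← Matrix.toLin'_apply'] at hcomp
    exact Matrix.toLin'.injective hcomp
  -- cast to ℝ
  set ρ : ℚ →+* ℝ := Rat.castHom ℝ with hρdef
  set Mr : Matrix (Fin k) (Fin n) ℝ := M.map ρ with hMr
  set Nr : Matrix (Fin n) (Fin k) ℝ := N.map ρ with hNr
  have hR : Mr * (Nr * Mr) = Mr := by
    rw [hMr, hNr, ← Matrix.map_mul, ← Matrix.map_mul, hQ]
  set b' : Fin k → ℝ := fun i => (b i : ℝ) with hb'
  rw [hW] at hxW
  have hMx : Mr *ᵥ x = b' := by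
    funext i
    simpa [hMr, hMdef, Matrix.mulVec, dotProduct, Matrix.map_apply] using hxW i
  -- the affine retraction T onto W
  set T : (Fin n → ℝ) → (Fin n → ℝ) := fun z => Nr *ᵥ b' + (z - Nr *ᵥ (Mr *ᵥ z)) with hT
  have hTx : T x = x := by
    show Nr *ᵥ b' + (x - Nr *ᵥ (Mr *ᵥ x)) = x
    rw [hMx]; abel
  have hMT : ∀ z, Mr *ᵥ (T z) = b' := by
    intro z
    have h1 : ∀ w, Mr *ᵥ (Nr *ᵥ (Mr *ᵥ w)) = Mr *ᵥ w := fun w => by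
      rw [Matrix.mulVec_mulVec, Matrix.mulVec_mulVec, Matrix.mul_assoc, hR]
    have h2 : Mr *ᵥ (Nr *ᵥ b') = b' := by
      rw [← hMx, h1, hMx]
    rw [hT]
    show Mr *ᵥ (Nr *ᵥ b' + (z - Nr *ᵥ (Mr *ᵥ z))) = b'
    rw [Matrix.mulVec_add, Matrix.mulVec_sub, h1 z, h2]
    abel
  -- T has linear part Pr := 1 - Nr * Mr
  set Pr : Matrix (Fin n) (Fin n) ℝ := 1 - Nr * Mr with hPr
  have hTaffine : ∀ z, T z = Pr *ᵥ (z - x) + x := by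
    intro z
    rw [hPr]
    simp only [Matrix.sub_mulVec, Matrix.one_mulVec, ← Matrix.mulVec_mulVec,
      Matrix.mulVec_sub, hMx, hT]
    abel
  -- choose δ > 0 small
  set S : Fin n → ℝ := fun j => ∑ l, |Pr j l| with hS
  have hSnn : ∀ j, 0 ≤ S j := fun j => Finset.sum_nonneg fun l _ => abs_nonneg _
  set δ : ℝ := Finset.univ.inf' (Finset.univ_nonempty) (fun j => x j / (1 + S j)) with hδdef
  have hδpos : 0 < δ := by
    rw [hδdef, Finset.lt_inf'_iff]
    intro j _
    exact div_pos (hxpos j) (by linarith [hSnn j])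
  have hδle : ∀ j, δ * (1 + S j) ≤ x j := by
    intro j
    have h1 : δ ≤ x j / (1 + S j) :=
      Finset.inf'_le _ (Finset.mem_univ j)
    rw [le_div_iff₀ (by linarith [hSnn j] : (0:ℝ) < 1 + S j)] at h1
    exact h1
  -- rational bounds around x
  have hlo : ∀ j, ∃ q : ℚ, x j - δ < (q : ℝ) ∧ (q : ℝ) < x j :=
    fun j => exists_rat_btwn (by linarith [hδpos])
  have hhi : ∀ j, ∃ q : ℚ, x j < (q : ℝ) ∧ (q : ℝ) < x j + δ :=
    fun j => exists_rat_btwn (by linarith [hδpos])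
  choose qlo hqlo1 hqlo2 using hlo
  choose qhi hqhi1 hqhi2 using hhi
  set B : Set (Fin n → ℝ) := Set.univ.pi fun j => ({(qlo j : ℝ), (qhi j : ℝ)} : Set ℝ) with hB
  have hxB : x ∈ convexHull ℝ B := by
    refine mem_convexHull_pi fun j _ => ?_
    rw [convexHull_pair, segment_eq_Icc (le_of_lt ((hqlo2 j).trans (hqhi1 j)))]
    exact ⟨le_of_lt (hqlo2 j), le_of_lt (hqhi1 j)⟩
  -- T as an affine map
  set Taff : (Fin n → ℝ) →ᵃ[ℝ] (Fin n → ℝ) :=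
    AffineMap.mk' T Pr.mulVecLin x (fun p' => by
      simp only [Matrix.mulVecLin_apply, vsub_eq_sub, vadd_eq_add, hTx]
      exact hTaffine p') with hTaffdef
  have himg : x ∈ convexHull ℝ (T '' B) := by
    have h1 : T '' (convexHull ℝ B) = convexHull ℝ (T '' B) :=
      Taff.image_convexHull B
    exact h1 ▸ ⟨x, hxB, hTx⟩
  refine convexHull_mono ?_ himg
  rintro _ ⟨z, hzB, rfl⟩
  -- z is a rational vector within δ of x
  have hz : ∀ j, ∃ c : ℚ, z j = (c : ℝ) ∧ |z j - x j| < δ := by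
    intro j
    rcases hzB j (Set.mem_univ j) with h | h
    · exact ⟨qlo j, h, by rw [h, abs_sub_lt_iff]; constructor <;> linarith [hqlo1 j, hqlo2 j]⟩
    · exact ⟨qhi j, h, by rw [h, abs_sub_lt_iff]; constructor <;> linarith [hqhi1 j, hqhi2 j]⟩
  choose c hc1 hc2 using hz
  have hzc : z = fun j => (c j : ℝ) := funext hc1
  -- bound on the perturbation
  have hclose : ∀ j, |T z j - x j| < x j := by
    intro j
    have h1 : T z j - x j = ∑ l, Pr j l * (z l - x l) := by
      rw [hTaffine z]
      simp [Matrix.mulVec, dotProduct]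
    rw [h1]
    calc |∑ l, Pr j l * (z l - x l)| ≤ ∑ l, |Pr j l * (z l - x l)| :=
          Finset.abs_sum_le_sum_abs _ _
      _ ≤ ∑ l, |Pr j l| * δ := by
          refine Finset.sum_le_sum fun l _ => ?_
          rw [abs_mul]
          exact mul_le_mul_of_nonneg_left (le_of_lt (hc2 l)) (abs_nonneg _)
      _ = S j * δ := by rw [hS, Finset.sum_mul]
      _ < (1 + S j) * δ := by nlinarith [hδpos]
      _ ≤ x j := by rw [mul_comm]; exact hδle j
  refine ⟨?_, ?_, ?_⟩
  · -- T z ∈ W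
    rw [hW]
    intro i
    have := congrFun (hMT z) i
    simpa [hMr, hMdef, Matrix.mulVec, dotProduct, Matrix.map_apply, hb'] using this
  · -- positivity
    intro j
    have := hclose j
    rw [abs_sub_lt_iff] at this
    linarith [this.2]
  · -- rationality
    intro j
    refine ⟨(N *ᵥ b) j + (c j - (N *ᵥ (M *ᵥ c)) j), ?_⟩
    have : T z j = (Nr *ᵥ b') j + (z j - (Nr *ᵥ (Mr *ᵥ z)) j) := by
      rw [hT]; simp
    rw [this, hzc]
    simp only [hMr, hNr, hMdef, hb', Matrix.mulVec, dotProduct, Matrix.map_apply,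
      Matrix.of_apply, hρdef, Rat.coe_castHom]
    push_cast
    ring
end

section
/- Let Δ ⊂ ℝⁿ be a convex body and p ∈ Δ. Define the extremal function E_{Δ,p} : Δ → [0,1] by E_{Δ,p}(x) = sup{ t ∈ [0,1] | x ∈ t·p + (1−t)·Δ }. Then the following are equivalent: (i) Δ is conical at p, i.e., Δ coincides in a neighborhood of p with a closed convex cone with apex p; (ii) E_{Δ,p} is continuous at p; (iii) every bounded concave upper-semicontinuous function on Δ is continuous at p. -/
open Set Filter Metric Topology

namespace Stmt15

variable {n : ℕ}

def Sset (Δ : Set (Fin n → ℝ)) (p x : Fin n → ℝ) : Set ℝ :=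
  {t : ℝ | t ∈ Set.Icc (0 : ℝ) 1 ∧ ∃ y ∈ Δ, x = t • p + (1 - t) • y}

noncomputable def Efun (Δ : Set (Fin n → ℝ)) (p : Fin n → ℝ) (x : Fin n → ℝ) : ℝ :=
  sSup (Sset Δ p x)

variable {Δ : Set (Fin n → ℝ)} {p x : Fin n → ℝ} {t : ℝ}

lemma zero_mem (hx : x ∈ Δ) : (0 : ℝ) ∈ Sset Δ p x :=
  ⟨⟨le_refl _, zero_le_one⟩, x, hx, by simp⟩

lemma subset_Icc : Sset Δ p x ⊆ Set.Icc (0:ℝ) 1 := fun _ ht => ht.1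

lemma bddAbove_S : BddAbove (Sset Δ p x) :=
  BddAbove.mono subset_Icc bddAbove_Icc

lemma E_le_one : Efun Δ p x ≤ 1 :=
  Real.sSup_le (fun _ ht => ht.1.2) zero_le_one

lemma E_nonneg (hx : x ∈ Δ) : 0 ≤ Efun Δ p x :=
  le_csSup bddAbove_S (zero_mem hx)

lemma E_p (hp : p ∈ Δ) : Efun Δ p p = 1 :=
  le_antisymm E_le_one (le_csSup bddAbove_S ⟨⟨zero_le_one, le_refl _⟩, p, hp, by simp⟩)

lemma isCompact_S (hcomp : IsCompact Δ) : IsCompact (Sset Δ p x) := by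
  have h1 : IsCompact ((Set.Icc (0:ℝ) 1 ×ˢ Δ) ∩
      {q : ℝ × (Fin n → ℝ) | x = q.1 • p + (1 - q.1) • q.2}) := by
    apply (isCompact_Icc.prod hcomp).inter_right
    have hc : Continuous fun q : ℝ × (Fin n → ℝ) => q.1 • p + (1 - q.1) • q.2 := by fun_prop
    exact isClosed_eq continuous_const hc
  have h2 := h1.image (continuous_fst)
  convert h2 using 1
  ext t
  constructor
  · rintro ⟨ht, y, hy, hxy⟩
    exact ⟨(t, y), ⟨⟨ht, hy⟩, hxy⟩, rfl⟩
  · rintro ⟨⟨t', y⟩, ⟨⟨ht, hy⟩, hxy⟩, rfl⟩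
    exact ⟨ht, y, hy, hxy⟩

lemma E_mem (hcomp : IsCompact Δ) (hx : x ∈ Δ) : Efun Δ p x ∈ Sset Δ p x :=
  (isCompact_S hcomp).sSup_mem ⟨0, zero_mem hx⟩

lemma mem_of_scale (ht0 : 0 ≤ t) (ht1 : t < 1)
    (h : p + (1 - t)⁻¹ • (x - p) ∈ Δ) : t ∈ Sset Δ p x := by
  refine ⟨⟨ht0, le_of_lt ht1⟩, _, h, ?_⟩
  have h1t : (1 : ℝ) - t ≠ 0 := by intro hc; linarith
  rw [smul_add, smul_smul, mul_inv_cancel₀ h1t]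
  module

lemma scale_of_mem (ht1 : t < 1) (h : t ∈ Sset Δ p x) :
    p + (1 - t)⁻¹ • (x - p) ∈ Δ := by
  obtain ⟨_, y, hy, hxy⟩ := h
  have h1t : (1:ℝ) - t ≠ 0 := by intro hc; linarith
  have hxp : x - p = (1 - t) • (y - p) := by rw [hxy]; module
  have : p + (1 - t)⁻¹ • (x - p) = y := by
    rw [hxp, smul_smul, inv_mul_cancel₀ h1t, one_smul]; abel
  rwa [this]


lemma cont_of_cone (hconv : Convex ℝ Δ) (hp : p ∈ Δ)
    {C : Set (Fin n → ℝ)}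
    (hCcone : ∀ x ∈ C, ∀ r : ℝ, 0 ≤ r → p + r • (x - p) ∈ C)
    {U : Set (Fin n → ℝ)} (hU : U ∈ nhds p) (hΔU : Δ ∩ U = C ∩ U) :
    ContinuousWithinAt (Efun Δ p) Δ p := by
  rw [Metric.continuousWithinAt_iff]
  intro ε hε
  obtain ⟨ρ, hρ, hball⟩ := Metric.mem_nhds_iff.1 hU
  set ε' := min ε 1 / 2 with hε'def
  have hmin : 0 < min ε 1 := lt_min hε zero_lt_one
  have hε'0 : 0 < ε' := by rw [hε'def]; linarith
  have hε'le : ε' ≤ 1/2 := by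
    have : min ε 1 ≤ 1 := min_le_right _ _
    rw [hε'def]; linarith
  have hε'lt : ε' < ε := by
    have : min ε 1 ≤ ε := min_le_left _ _
    rw [hε'def]; linarith
  refine ⟨ε' * ρ, by positivity, ?_⟩
  intro x hx hdist
  have hxU : x ∈ U := by
    apply hball
    rw [mem_ball]
    have : ε' * ρ ≤ ρ := by nlinarith
    linarith
  have hxCU : x ∈ C ∩ U := by rw [← hΔU]; exact ⟨hx, hxU⟩
  set z := p + ε'⁻¹ • (x - p) with hzdef
  have hzC : z ∈ C := hCcone x hxCU.1 ε'⁻¹ (by positivity)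
  have hzball : z ∈ Metric.ball p ρ := by
    rw [mem_ball, dist_eq_norm]
    have hzp : z - p = ε'⁻¹ • (x - p) := by rw [hzdef]; abel
    rw [hzp, norm_smul]
    have hxp : ‖x - p‖ < ε' * ρ := by rw [← dist_eq_norm]; exact hdist
    rw [Real.norm_eq_abs, abs_of_pos (by positivity : (0:ℝ) < ε'⁻¹)]
    calc ε'⁻¹ * ‖x - p‖ < ε'⁻¹ * (ε' * ρ) :=
          mul_lt_mul_of_pos_left hxp (by positivity)
      _ = ρ := by field_simp
  have hzΔ : z ∈ Δ := by
    have : z ∈ Δ ∩ U := by rw [hΔU]; exact ⟨hzC, hball hzball⟩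
    exact this.1
  have hmem : (1 - ε') ∈ Sset Δ p x := by
    apply mem_of_scale (by linarith) (by linarith)
    have h1 : (1 - (1 - ε'))⁻¹ = ε'⁻¹ := by norm_num
    rw [h1]; exact hzΔ
  have hEx : 1 - ε' ≤ Efun Δ p x := le_csSup bddAbove_S hmem
  have hle : Efun Δ p x ≤ 1 := E_le_one
  rw [E_p hp, Real.dist_eq, abs_of_nonpos (by linarith)]
  linarith


lemma doubling (hcomp : IsCompact Δ) (hconv : Convex ℝ Δ) (hp : p ∈ Δ)
    (hcont : ContinuousWithinAt (Efun Δ p) Δ p) :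
    ∃ δ > 0, ∀ x ∈ Δ, dist x p < δ → p + (2:ℝ) • (x - p) ∈ Δ := by
  obtain ⟨δ, hδ, hδ'⟩ := Metric.continuousWithinAt_iff.1 hcont (1/2) (by norm_num)
  refine ⟨δ, hδ, fun x hx hxδ => ?_⟩
  have h1 := hδ' hx hxδ
  rw [E_p hp, Real.dist_eq] at h1
  have hEx1 : Efun Δ p x ≤ 1 := E_le_one
  have hhalf : 1/2 < Efun Δ p x := by
    have := abs_lt.1 h1
    linarith [this.1]
  set t := Efun Δ p x with htdef
  have htS : t ∈ Sset Δ p x := E_mem hcomp hx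
  by_cases ht1 : t = 1
  · obtain ⟨_, y, hy, hxy⟩ := htS
    rw [ht1] at hxy
    have hxp : x = p := by rw [hxy]; simp
    rw [hxp]
    simpa using hp
  · have ht1' : t < 1 := lt_of_le_of_ne hEx1 ht1
    have h1tpos : (0:ℝ) < 1 - t := by linarith
    have h1tne : (1:ℝ) - t ≠ 0 := ne_of_gt h1tpos
    have hy := scale_of_mem ht1' htS
    have hmem := hconv hp hy (a := 1 - 2*(1-t)) (b := 2*(1-t))
      (by linarith) (by linarith) (by ring)
    convert hmem using 1
    match_scalars <;> field_simp <;> ring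

lemma cone_of_cont (hcomp : IsCompact Δ) (hconv : Convex ℝ Δ) (hp : p ∈ Δ)
    (hcont : ContinuousWithinAt (Efun Δ p) Δ p) :
    ∃ C : Set (Fin n → ℝ), IsClosed C ∧ Convex ℝ C ∧
      (∀ x ∈ C, ∀ r : ℝ, 0 ≤ r → p + r • (x - p) ∈ C) ∧
      ∃ U ∈ nhds p, Δ ∩ U = C ∩ U := by
  obtain ⟨δ, hδ, hdouble⟩ := doubling hcomp hconv hp hcont
  set K : Set (Fin n → ℝ) := {z | ∃ r : ℝ, 0 ≤ r ∧ ∃ x ∈ Δ, z = p + r • (x - p)} with hKdef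
  have hΔK : Δ ⊆ K := fun x hx => ⟨1, zero_le_one, x, hx, by rw [one_smul]; abel⟩
  have hKconv : Convex ℝ K := by
    rintro z₁ ⟨r₁, hr₁, x₁, hx₁, rfl⟩ z₂ ⟨r₂, hr₂, x₂, hx₂, rfl⟩ a b ha hb hab
    rcases eq_or_lt_of_le (by positivity : (0:ℝ) ≤ a * r₁ + b * r₂) with hr | hr
    · have h1 : a * r₁ = 0 := by nlinarith
      have h2 : b * r₂ = 0 := by nlinarith
      refine ⟨0, le_refl _, x₁, hx₁, ?_⟩
      match_scalars
      · linarith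
      · linarith
      · linarith
    · have hne : a * r₁ + b * r₂ ≠ 0 := ne_of_gt hr
      refine ⟨a*r₁+b*r₂, le_of_lt hr,
        (a*r₁/(a*r₁+b*r₂)) • x₁ + (b*r₂/(a*r₁+b*r₂)) • x₂,
        hconv hx₁ hx₂ (by positivity) (by positivity) (by field_simp), ?_⟩
      match_scalars <;> field_simp <;> ring_nf <;> nlinarith [hab]
  have hKcone : ∀ z ∈ K, ∀ r : ℝ, 0 ≤ r → p + r • (z - p) ∈ K := by
    rintro z ⟨r', hr', x, hx, rfl⟩ r hr
    exact ⟨r * r', by positivity, x, hx, by rw [add_sub_cancel_left, smul_smul]⟩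
  have hCcone : ∀ z ∈ closure K, ∀ r : ℝ, 0 ≤ r → p + r • (z - p) ∈ closure K := by
    intro z hz r hr
    have hcontf : Continuous (fun w : Fin n → ℝ => p + r • (w - p)) := by fun_prop
    have h1 : (fun w : Fin n → ℝ => p + r • (w - p)) z ∈
        closure ((fun w : Fin n → ℝ => p + r • (w - p)) '' K) :=
      image_closure_subset_closure_image hcontf (mem_image_of_mem _ hz)
    refine closure_mono ?_ h1
    rintro _ ⟨w, hw, rfl⟩
    exact hKcone w hw r hr
  have base : ∀ r : ℝ, 0 ≤ r → r ≤ 1 → ∀ x ∈ Δ, p + r • (x - p) ∈ Δ := by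
    intro r hr0 hr1 x hx
    have h := hconv hp hx (a := 1 - r) (b := r) (by linarith) hr0 (by ring)
    convert h using 1
    module
  have key : ∀ k : ℕ, ∀ r : ℝ, 0 ≤ r → r ≤ 2^k → ∀ x ∈ Δ,
      ‖r • (x - p)‖ < δ/2 → p + r • (x - p) ∈ Δ := by
    intro k
    induction k with
    | zero =>
      intro r hr0 hr1 x hx _
      exact base r hr0 (by simpa using hr1) x hx
    | succ k ih =>
      intro r hr0 hr2 x hx hn
      by_cases hr1 : r ≤ 1
      · exact base r hr0 hr1 x hx
      · push_neg at hr1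
        have h2k : r/2 ≤ 2^k := by
          rw [pow_succ] at hr2; linarith
        have heq : (r/2) • (x-p) = (1/2 : ℝ) • (r • (x - p)) := by
          rw [smul_smul]; ring_nf
        have hnorm2 : ‖(r/2) • (x - p)‖ < δ/2 := by
          rw [heq, norm_smul, Real.norm_eq_abs]
          rw [abs_of_pos (by norm_num : (0:ℝ) < 1/2)]
          nlinarith [norm_nonneg (r • (x-p))]
        have hq := ih (r/2) (by linarith) h2k x hx hnorm2
        have hqd : dist (p + (r/2) • (x - p)) p < δ := by
          rw [dist_eq_norm]
          have h3 : p + (r/2) • (x - p) - p = (r/2) • (x - p) := by abel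
          rw [h3]; linarith
        have hres := hdouble _ hq hqd
        convert hres using 1
        rw [add_sub_cancel_left, smul_smul]
        have h4 : (2:ℝ) * (r/2) = r := by ring
        rw [h4]
  have hKsub : ∀ z ∈ K, z ∈ Metric.ball p (δ/2) → z ∈ Δ := by
    rintro z ⟨r, hr, x, hx, rfl⟩ hball
    obtain ⟨k, hk⟩ := pow_unbounded_of_one_lt r (by norm_num : (1:ℝ) < 2)
    apply key k r hr (le_of_lt hk) x hx
    rw [mem_ball, dist_eq_norm, add_sub_cancel_left] at hball
    exact hball
  refine ⟨closure K, isClosed_closure, hKconv.closure, hCcone,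
    Metric.ball p (δ/4), Metric.ball_mem_nhds _ (by positivity), ?_⟩
  apply Set.Subset.antisymm
  · rintro z ⟨hzΔ, hzb⟩
    exact ⟨subset_closure (hΔK hzΔ), hzb⟩
  · rintro z ⟨hzC, hzb⟩
    refine ⟨?_, hzb⟩
    have hz2 : z ∈ Metric.ball p (δ/2) := by
      rw [mem_ball] at hzb ⊢; linarith
    have h3 : z ∈ closure (Metric.ball p (δ/2) ∩ K) :=
      Metric.isOpen_ball.inter_closure ⟨hz2, hzC⟩
    have h4 : Metric.ball p (δ/2) ∩ K ⊆ Δ := fun w hw => hKsub w hw.2 hw.1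
    have h5 := closure_mono h4 h3
    rwa [hcomp.isClosed.closure_eq] at h5


lemma cont_all_of_contE (hcomp : IsCompact Δ) (hp : p ∈ Δ)
    (hcont : ContinuousWithinAt (Efun Δ p) Δ p)
    (f : (Fin n → ℝ) → ℝ) (hfb : BddBelow (f '' Δ))
    (hfc : ConcaveOn ℝ Δ f) (hfu : UpperSemicontinuousOn f Δ) :
    ContinuousWithinAt f Δ p := by
  obtain ⟨m, hm⟩ := hfb
  have hmf : ∀ y ∈ Δ, m ≤ f y := fun y hy => hm (mem_image_of_mem f hy)
  set M := max (f p - m) 1 with hMdef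
  have hM0 : (0:ℝ) < M := lt_of_lt_of_le one_pos (le_max_right _ _)
  have hMfp : f p - m ≤ M := le_max_left _ _
  have hcont' : Tendsto (Efun Δ p) (𝓝[Δ] p) (𝓝 1) := by
    have h := hcont
    rwa [ContinuousWithinAt, E_p hp] at h
  refine tendsto_order.2 ⟨?_, fun b hb => hfu p hp b hb⟩
  intro a ha
  have hfa : (0:ℝ) < (f p - a)/M := div_pos (by linarith) hM0
  have hev := hcont' (Ioi_mem_nhds (show 1 - (f p - a)/M < 1 by linarith))
  filter_upwards [hev, self_mem_nhdsWithin] with x hx1 hx2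
  rw [mem_preimage, mem_Ioi] at hx1
  obtain ⟨⟨ht0, ht1⟩, y, hy, hxy⟩ := E_mem hcomp hx2
  set t := Efun Δ p x with htdef
  have hfx : t * f p + (1 - t) * f y ≤ f x := by
    have h := hfc.2 hp hy (show (0:ℝ) ≤ t from ht0) (show (0:ℝ) ≤ 1 - t by linarith) (show t + (1 - t) = 1 by ring)
    rw [← hxy] at h
    simpa [smul_eq_mul] using h
  have hfy := hmf y hy
  have h1t : 1 - t < (f p - a)/M := by linarith
  have hprod : (1 - t) * M < f p - a := by
    calc (1-t)*M < ((f p - a)/M)*M := mul_lt_mul_of_pos_right h1t hM0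
      _ = f p - a := by field_simp
  nlinarith [mul_le_mul_of_nonneg_left hMfp (by linarith : (0:ℝ) ≤ 1 - t),
    mul_le_mul_of_nonneg_left hfy (by linarith : (0:ℝ) ≤ 1 - t)]

lemma concaveE (hcomp : IsCompact Δ) (hconv : Convex ℝ Δ) (hp : p ∈ Δ) :
    ConcaveOn ℝ Δ (Efun Δ p) := by
  refine ⟨hconv, ?_⟩
  intro x₁ hx₁ x₂ hx₂ a b ha hb hab
  obtain ⟨⟨h10, h11⟩, y₁, hy₁, he₁⟩ := E_mem hcomp hx₁
  obtain ⟨⟨h20, h21⟩, y₂, hy₂, he₂⟩ := E_mem hcomp hx₂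
  set t₁ := Efun Δ p x₁ with ht₁def
  set t₂ := Efun Δ p x₂ with ht₂def
  set t := a*t₁ + b*t₂ with htdef
  have ht0 : 0 ≤ t := by positivity
  have ht1 : t ≤ 1 := by nlinarith
  have hkey : t ≤ Efun Δ p (a • x₁ + b • x₂) := by
    by_cases hs : 1 - t = 0
    · have h1 : a*(1-t₁) = 0 := by nlinarith
      have h2 : b*(1-t₂) = 0 := by nlinarith
      have hmem : (1:ℝ) ∈ Sset Δ p (a • x₁ + b • x₂) := by
        refine ⟨⟨zero_le_one, le_refl _⟩, p, hp, ?_⟩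
        rw [he₁, he₂]
        match_scalars
        · linarith
        · linarith
        · linarith
      have := le_csSup bddAbove_S hmem
      calc t ≤ 1 := ht1
        _ ≤ _ := this
    · have hspos : 0 < 1 - t := lt_of_le_of_ne (by linarith) (Ne.symm hs)
      have hc1 : 0 ≤ a*(1-t₁)/(1-t) := div_nonneg (mul_nonneg ha (by linarith)) hspos.le
      have hc2 : 0 ≤ b*(1-t₂)/(1-t) := div_nonneg (mul_nonneg hb (by linarith)) hspos.le
      have hcsum : a*(1-t₁)/(1-t) + b*(1-t₂)/(1-t) = 1 := by
        field_simp
        linarith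
      have hyΔ := hconv hy₁ hy₂ hc1 hc2 hcsum
      have hmem : t ∈ Sset Δ p (a • x₁ + b • x₂) := by
        refine ⟨⟨ht0, ht1⟩, _, hyΔ, ?_⟩
        rw [he₁, he₂]
        match_scalars <;> field_simp <;> ring
      exact le_csSup bddAbove_S hmem
  simpa [smul_eq_mul] using hkey

lemma uscE (hcomp : IsCompact Δ) : UpperSemicontinuousOn (Efun Δ p) Δ := by
  intro z hz y hy
  set A := (fun q : ℝ × (Fin n → ℝ) => q.1 • p + (1 - q.1) • q.2) ''
    ((Icc y 1 ∩ Icc 0 1) ×ˢ Δ) with hAdef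
  have hAc : IsCompact A := by
    apply IsCompact.image
    · exact (isCompact_Icc.inter_right isClosed_Icc).prod hcomp
    · fun_prop
  have hmemA : ∀ w, w ∈ A ↔ ∃ t ∈ Sset Δ p w, y ≤ t := by
    intro w
    constructor
    · rintro ⟨⟨t, u⟩, ⟨⟨⟨hty, ht1⟩, ht0, ht1'⟩, huΔ⟩, heq⟩
      exact ⟨t, ⟨⟨ht0, ht1'⟩, u, huΔ, heq.symm⟩, hty⟩
    · rintro ⟨t, ⟨⟨ht0, ht1⟩, u, huΔ, heq⟩, hty⟩
      exact ⟨(t, u), ⟨⟨⟨hty, ht1⟩, ht0, ht1⟩, huΔ⟩, heq.symm⟩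
  have hzA : z ∉ A := by
    intro hzA
    obtain ⟨t, htS, hty⟩ := (hmemA z).1 hzA
    have := le_csSup (bddAbove_S (Δ := Δ) (p := p) (x := z)) htS
    exact absurd hy (not_lt.2 (le_trans hty this))
  have hopen : Aᶜ ∈ 𝓝 z := hAc.isClosed.isOpen_compl.mem_nhds hzA
  filter_upwards [nhdsWithin_le_nhds hopen, self_mem_nhdsWithin] with x hxA hxΔ
  by_contra hcon
  push_neg at hcon
  exact hxA ((hmemA x).2 ⟨Efun Δ p x, E_mem hcomp hxΔ, hcon⟩)


end Stmt15

/-- Howe's criterion: for a convex body `Δ ⊂ ℝⁿ`, a point `p ∈ Δ`, and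
the extremal function `E(x) = sup{t ∈ [0,1] | x ∈ tp + (1-t)Δ}`, the following are
equivalent: (i) `Δ` is conical at `p` (coincides near `p` with a closed convex cone with
apex `p`); (ii) `E` is continuous at `p`; (iii) every bounded concave usc function on
`Δ` is continuous at `p`. -/
theorem stmt_15 (n : ℕ) (Δ : Set (Fin n → ℝ)) (hcomp : IsCompact Δ)
    (hconv : Convex ℝ Δ) (hint : (interior Δ).Nonempty)
    (p : Fin n → ℝ) (hp : p ∈ Δ)
    (E : (Fin n → ℝ) → ℝ)
    (hE : ∀ x, E x = sSup {t : ℝ | t ∈ Set.Icc (0 : ℝ) 1 ∧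
      ∃ y ∈ Δ, x = t • p + (1 - t) • y}) :
    ((∃ C : Set (Fin n → ℝ), IsClosed C ∧ Convex ℝ C ∧
        (∀ x ∈ C, ∀ r : ℝ, 0 ≤ r → p + r • (x - p) ∈ C) ∧
        ∃ U ∈ nhds p, Δ ∩ U = C ∩ U) ↔
      ContinuousWithinAt E Δ p) ∧
    (ContinuousWithinAt E Δ p ↔
      ∀ f : (Fin n → ℝ) → ℝ, BddAbove (f '' Δ) → BddBelow (f '' Δ) →
        ConcaveOn ℝ Δ f → UpperSemicontinuousOn f Δ → ContinuousWithinAt f Δ p) := by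
  have hEeq : E = Stmt15.Efun Δ p := funext hE
  subst hEeq
  constructor
  · constructor
    · rintro ⟨C, hCc, hCconv, hCcone, U, hU, hΔU⟩
      exact Stmt15.cont_of_cone hconv hp hCcone hU hΔU
    · exact Stmt15.cone_of_cont hcomp hconv hp
  · constructor
    · intro hcont f hfa hfb hfc hfu
      exact Stmt15.cont_all_of_contE hcomp hp hcont f hfb hfc hfu
    · intro h
      apply h
      · exact ⟨1, by rintro v ⟨x, hx, rfl⟩; exact Stmt15.E_le_one⟩
      · exact ⟨0, by rintro v ⟨x, hx, rfl⟩; exact Stmt15.E_nonneg hx⟩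
      · exact Stmt15.concaveE hcomp hconv hp
      · exact Stmt15.uscE hcomp
end

section
/- Every bounded concave upper-semicontinuous function on a polytope Δ ⊂ ℝⁿ is continuous on Δ (including at all boundary points). Equivalently, a polytope is conical at each of its points. -/
/-!
Fix `p` in the polytope `P = conv S`. By the conic Carathéodory theorem, for `x` in the cone
`p + ℝ≥0 (P - p)` the vector `x - p` is a nonnegative combination of a linearly independent
subfamily of the `s - p`, and for such subfamilies the total weight is at most `K ‖x - p‖`,
because their convex hulls form a compact set avoiding `0`. So `x = p + t (y - p)` with `y ∈ P`
and `t ≤ K ‖x - p‖`. If `‖x - p‖ < 1 / K` then `t ≤ 1`, so `P` agrees with the cone near `p`; the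
cone is closed because its part in a ball is a continuous image of `[0, K R] × P`. For a concave
`f ≥ M` on `P`, `f x ≥ (1 - t) f p + t f y ≥ f p - K (f p - M) ‖x - p‖`, which is lower
semicontinuity at `p`; upper semicontinuity is assumed.
-/

open Set Filter Topology Metric

section Caratheodory

variable {ι 𝕜 E : Type*} [Field 𝕜] [LinearOrder 𝕜] [IsStrictOrderedRing 𝕜]
  [AddCommGroup E] [Module 𝕜 E] {v : ι → E} {s : Finset ι} {c : ι → 𝕜}

/-- Subtracting the largest admissible multiple of a positive linear relation kills one
coefficient of a nonnegative combination. -/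
theorem exists_nonneg_sum_smul_eq_of_not_linearIndepOn (hs : ¬LinearIndepOn 𝕜 v s)
    (hc : ∀ i ∈ s, 0 ≤ c i) :
    ∃ i₀ ∈ s, ∃ c' : ι → 𝕜, (∀ i ∈ s, 0 ≤ c' i) ∧ c' i₀ = 0 ∧
      ∑ i ∈ s, c' i • v i = ∑ i ∈ s, c i • v i := by
  obtain ⟨g, hg, hpos⟩ : ∃ g : ι → 𝕜, ∑ i ∈ s, g i • v i = 0 ∧ ∃ i ∈ s, 0 < g i := by
    obtain ⟨g, hg, i, hi, hgi⟩ := not_linearIndepOn_finset_iff.1 hs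
    rcases hgi.lt_or_gt with hneg | hpos
    · exact ⟨-g, by simp [neg_smul, Finset.sum_neg_distrib, hg], i, hi, by simpa using hneg⟩
    · exact ⟨g, hg, i, hi, hpos⟩
  obtain ⟨i₀, hi₀, hmin⟩ := (s.filter (0 < g ·)).exists_min_image (fun i => c i / g i)
    (let ⟨i, hi, hgi⟩ := hpos; ⟨i, Finset.mem_filter.2 ⟨hi, hgi⟩⟩)
  obtain ⟨hi₀s, hgi₀⟩ := Finset.mem_filter.1 hi₀
  set τ := c i₀ / g i₀
  have hτ : 0 ≤ τ := div_nonneg (hc i₀ hi₀s) hgi₀.le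
  refine ⟨i₀, hi₀s, fun i => c i - τ * g i, fun i hi => ?_,
    by simp [τ, div_mul_cancel₀ _ hgi₀.ne'],
    by simp [sub_smul, mul_smul, Finset.sum_sub_distrib, ← Finset.smul_sum, hg]⟩
  rcases le_or_gt (g i) 0 with hgi | hgi
  · nlinarith [hc i hi]
  · have := hmin i (Finset.mem_filter.2 ⟨hi, hgi⟩)
    rw [le_div_iff₀ hgi] at this
    linarith

theorem exists_linearIndepOn_nonneg_sum_smul_eq (v : ι → E) (s : Finset ι)
    (hc : ∀ i ∈ s, 0 ≤ c i) :
    ∃ t ⊆ s, LinearIndepOn 𝕜 v t ∧ ∃ d : ι → 𝕜, (∀ i ∈ t, 0 ≤ d i) ∧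
      ∑ i ∈ t, d i • v i = ∑ i ∈ s, c i • v i := by
  classical
  induction s using Finset.strongInduction generalizing c with
  | H s ih =>
  by_cases hli : LinearIndepOn 𝕜 v s
  · exact ⟨s, subset_rfl, hli, c, hc, rfl⟩
  obtain ⟨i₀, hi₀, c', hc', hc'i₀, hsum⟩ := exists_nonneg_sum_smul_eq_of_not_linearIndepOn hli hc
  obtain ⟨t, hts, htli, d, hd, hdsum⟩ := ih (s.erase i₀) (s.erase_ssubset hi₀)
    (fun i hi => hc' i (Finset.mem_of_mem_erase hi))
  refine ⟨t, hts.trans (s.erase_subset i₀), htli, d, hd, ?_⟩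
  rw [hdsum, Finset.sum_erase _ (by rw [hc'i₀, zero_smul]), hsum]

theorem LinearIndepOn.zero_notMem_convexHull_image {t : Finset ι} (h : LinearIndepOn 𝕜 v t) :
    (0 : E) ∉ convexHull 𝕜 (v '' t) := by
  classical
  rw [← Finset.coe_image, Finset.mem_convexHull']
  rintro ⟨w, -, hw₁, hw₀⟩
  rw [Finset.sum_image h.injOn] at hw₀ hw₁
  have := linearIndepOn_finset_iff.1 h (w ∘ v) hw₀
  rw [Finset.sum_eq_zero (f := fun i => w (v i)) this] at hw₁
  exact zero_ne_one hw₁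

end Caratheodory

section Cone

variable {E : Type*} [AddCommGroup E] [Module ℝ E]

def coneAt (s : Set E) (p : E) : Set E :=
  {x | ∃ t : ℝ, 0 ≤ t ∧ ∃ y ∈ s, x = p + t • (y - p)}

theorem subset_coneAt (s : Set E) (p : E) : s ⊆ coneAt s p :=
  fun y hy => ⟨1, zero_le_one, y, hy, by rw [one_smul, add_sub_cancel]⟩

theorem add_smul_sub_mem_coneAt {s : Set E} {p x : E} (hx : x ∈ coneAt s p) {r : ℝ}
    (hr : 0 ≤ r) : p + r • (x - p) ∈ coneAt s p := by
  obtain ⟨t, ht, y, hy, rfl⟩ := hx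
  exact ⟨r * t, mul_nonneg hr ht, y, hy, by rw [add_sub_cancel_left, smul_smul]⟩

theorem Convex.convex_coneAt {s : Set E} (hs : Convex ℝ s) {p : E} (hp : p ∈ s) :
    Convex ℝ (coneAt s p) := by
  rintro _ ⟨t₁, ht₁, y₁, hy₁, rfl⟩ _ ⟨t₂, ht₂, y₂, hy₂, rfl⟩ a b ha hb hab
  have hcomb : a • (p + t₁ • (y₁ - p)) + b • (p + t₂ • (y₂ - p)) =
      p + (a * t₁) • (y₁ - p) + (b * t₂) • (y₂ - p) := by
    linear_combination (norm := module) hab • p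
  rw [hcomb]
  have h₁ := mul_nonneg ha ht₁
  have h₂ := mul_nonneg hb ht₂
  rcases (add_nonneg h₁ h₂).eq_or_lt with hzero | hpos
  · obtain ⟨h₁, h₂⟩ := (add_eq_zero_iff_of_nonneg h₁ h₂).1 hzero.symm
    exact ⟨0, le_rfl, p, hp, by simp [h₁, h₂]⟩
  · refine ⟨_, hpos.le, _, convex_iff_div.1 hs hy₁ hy₂ h₁ h₂ hpos, ?_⟩
    simp only [smul_add, smul_sub, smul_smul, mul_div_cancel₀ _ hpos.ne']
    module

end Cone

section Normed

variable {ι E : Type*} [NormedAddCommGroup E] [NormedSpace ℝ E]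

theorem exists_nonneg_sum_smul_eq_sum_le_mul_norm (v : ι → E) (s : Finset ι) :
    ∃ K > 0, ∀ c : ι → ℝ, (∀ i ∈ s, 0 ≤ c i) → ∃ t ⊆ s, ∃ d : ι → ℝ, (∀ i ∈ t, 0 ≤ d i) ∧
      ∑ i ∈ t, d i • v i = ∑ i ∈ s, c i • v i ∧ ∑ i ∈ t, d i ≤ K * ‖∑ i ∈ s, c i • v i‖ := by
  classical
  set Q := ⋃ t ∈ s.powerset.filter (fun t : Finset ι => LinearIndepOn ℝ v (t : Set ι)),
    convexHull ℝ (v '' (t : Set ι))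
  have hQ : IsCompact Q :=
    Finset.isCompact_biUnion _ fun t _ => (t.finite_toSet.image v).isCompact_convexHull ℝ
  have h0 : (0 : E) ∉ Q := by
    simp only [Q, mem_iUnion₂, Finset.mem_filter, not_exists]
    exact fun t ht => ht.2.zero_notMem_convexHull_image
  obtain ⟨ε, hε, hball⟩ := Metric.mem_nhds_iff.1 (hQ.isClosed.isOpen_compl.mem_nhds h0)
  refine ⟨ε⁻¹, inv_pos.2 hε, fun c hc => ?_⟩
  obtain ⟨t, hts, hli, d, hd, hsum⟩ := exists_linearIndepOn_nonneg_sum_smul_eq v s hc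
  refine ⟨t, hts, d, hd, hsum, ?_⟩
  rcases (Finset.sum_nonneg hd).eq_or_lt with hzero | hpos
  · rw [← hzero]
    positivity
  have hmem : t.centerMass d v ∈ Q :=
    mem_biUnion (Finset.mem_filter.2 ⟨Finset.mem_powerset.2 hts, hli⟩)
      (t.centerMass_mem_convexHull hd hpos fun i hi => mem_image_of_mem v hi)
  have hε_le : ε ≤ (∑ i ∈ t, d i)⁻¹ * ‖∑ i ∈ s, c i • v i‖ := by
    have := not_lt.1 fun h => hball (mem_ball_zero_iff.2 h) hmem
    rwa [Finset.centerMass, norm_smul, hsum, norm_inv, Real.norm_of_nonneg hpos.le] at this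
  rw [le_inv_mul_iff₀ hpos] at hε_le
  rwa [le_inv_mul_iff₀ hε, mul_comm]

theorem exists_forall_mem_coneAt_convexHull_le_mul_norm (S : Finset E) {p : E}
    (hp : p ∈ convexHull ℝ (S : Set E)) :
    ∃ K > 0, ∀ x ∈ coneAt (convexHull ℝ (S : Set E)) p,
      ∃ t, 0 ≤ t ∧ t ≤ K * ‖x - p‖ ∧ ∃ y ∈ convexHull ℝ (S : Set E), x = p + t • (y - p) := by
  obtain ⟨K, hK, hbound⟩ := exists_nonneg_sum_smul_eq_sum_le_mul_norm (· - p) S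
  refine ⟨K, hK, ?_⟩
  rintro _ ⟨t₀, ht₀, y₀, hy₀, rfl⟩
  obtain ⟨w, hw₀, hw₁, rfl⟩ := Finset.mem_convexHull'.1 hy₀
  have hx : t₀ • (∑ s ∈ S, w s • s - p) = ∑ s ∈ S, (t₀ * w s) • (s - p) := by
    simp [mul_smul, smul_sub, ← Finset.smul_sum, Finset.sum_sub_distrib, ← Finset.sum_smul, hw₁]
  obtain ⟨T, hTS, d, hd, hsum, hle⟩ := hbound _ fun s hs => mul_nonneg ht₀ (hw₀ s hs)
  simp only [add_sub_cancel_left, add_right_inj]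
  rw [← hx] at hsum hle
  rw [← hsum] at hle ⊢
  rcases (Finset.sum_nonneg hd).eq_or_lt with hzero | hpos
  · refine ⟨0, le_rfl, by positivity, p, hp, ?_⟩
    have hd0 := (Finset.sum_eq_zero_iff_of_nonneg hd).1 hzero.symm
    rw [Finset.sum_eq_zero fun i hi => by rw [hd0 i hi, zero_smul], zero_smul]
  · refine ⟨_, hpos.le, hle, T.centerMass d id,
      T.centerMass_mem_convexHull hd hpos fun i hi => hTS hi, ?_⟩
    rw [Finset.centerMass, smul_sub, smul_inv_smul₀ hpos.ne']
    simp [smul_sub, Finset.sum_sub_distrib, Finset.sum_smul]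

theorem isClosed_coneAt_convexHull (S : Finset E) {p : E} (hp : p ∈ convexHull ℝ (S : Set E)) :
    IsClosed (coneAt (convexHull ℝ (S : Set E)) p) := by
  obtain ⟨K, hK, hrepr⟩ := exists_forall_mem_coneAt_convexHull_le_mul_norm S hp
  refine isClosed_of_closure_subset fun x hx => ?_
  set R := ‖x - p‖ + 1
  set F := (fun q : ℝ × E => p + q.1 • (q.2 - p)) ''
    (Icc 0 (K * R) ×ˢ convexHull ℝ (S : Set E))
  have hF : IsCompact F :=
    (isCompact_Icc.prod (S.finite_toSet.isCompact_convexHull ℝ)).image (by fun_prop)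
  have hFC : F ⊆ coneAt (convexHull ℝ (S : Set E)) p := by
    rintro _ ⟨⟨t, y⟩, ⟨⟨ht, -⟩, hy⟩, rfl⟩
    exact ⟨t, ht, y, hy, rfl⟩
  have hCF : ball p R ∩ coneAt (convexHull ℝ (S : Set E)) p ⊆ F := by
    rintro z ⟨hzR, hz⟩
    obtain ⟨t, ht, htK, y, hy, rfl⟩ := hrepr z hz
    refine ⟨(t, y), ⟨⟨ht, htK.trans ?_⟩, hy⟩, rfl⟩
    exact mul_le_mul_of_nonneg_left (mem_ball_iff_norm.1 hzR).le hK.le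
  have hxR : x ∈ ball p R := by simp [R, dist_eq_norm]
  exact hFC (hF.isClosed.closure_subset_iff.2 hCF (isOpen_ball.inter_closure ⟨hxR, hx⟩))

theorem exists_convexHull_inter_ball_eq_coneAt_inter_ball (S : Finset E) {p : E}
    (hp : p ∈ convexHull ℝ (S : Set E)) : ∃ r > 0,
      convexHull ℝ (S : Set E) ∩ ball p r = coneAt (convexHull ℝ (S : Set E)) p ∩ ball p r := by
  obtain ⟨K, hK, hrepr⟩ := exists_forall_mem_coneAt_convexHull_le_mul_norm S hp
  refine ⟨K⁻¹, inv_pos.2 hK, Subset.antisymm (inter_subset_inter_left _ (subset_coneAt _ p)) ?_⟩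
  rintro x ⟨hx, hxr⟩
  refine ⟨?_, hxr⟩
  obtain ⟨t, ht, htK, y, hy, rfl⟩ := hrepr x hx
  have ht₁ : t ≤ 1 := by
    have := mul_lt_mul_of_pos_left (mem_ball_iff_norm.1 hxr) hK
    rw [mul_inv_cancel₀ hK.ne'] at this
    linarith
  exact (convex_convexHull ℝ _).add_smul_sub_mem hp hy ⟨ht, ht₁⟩

theorem ConcaveOn.exists_sub_mul_norm_le_convexHull {S : Finset E} {f : E → ℝ}
    (hf : ConcaveOn ℝ (convexHull ℝ (S : Set E)) f)
    (hbdd : BddBelow (f '' convexHull ℝ (S : Set E)))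
    {p : E} (hp : p ∈ convexHull ℝ (S : Set E)) :
    ∃ C, ∀ x ∈ convexHull ℝ (S : Set E), f p - C * ‖x - p‖ ≤ f x := by
  obtain ⟨K, -, hrepr⟩ := exists_forall_mem_coneAt_convexHull_le_mul_norm S hp
  obtain ⟨M, hM⟩ := hbdd
  have hMf : ∀ x ∈ convexHull ℝ (S : Set E), M ≤ f x := fun x hx => hM (mem_image_of_mem f hx)
  refine ⟨K * (f p - M), fun x hx => ?_⟩
  obtain ⟨t, ht, htK, y, hy, hxy⟩ := hrepr x (subset_coneAt _ p hx)
  have hdrop : f p - t * (f p - M) ≤ f x := by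
    rcases le_or_gt t 1 with ht₁ | ht₁
    · have := hf.2 hp hy (sub_nonneg.2 ht₁) ht (sub_add_cancel 1 t)
      rw [smul_eq_mul, smul_eq_mul, show (1 - t) • p + t • y = x by rw [hxy]; module] at this
      nlinarith [hMf y hy]
    · nlinarith [hMf x hx, hMf p hp]
  nlinarith [hMf p hp]

theorem ConcaveOn.lowerSemicontinuousOn_convexHull {S : Finset E} {f : E → ℝ}
    (hf : ConcaveOn ℝ (convexHull ℝ (S : Set E)) f)
    (hbdd : BddBelow (f '' convexHull ℝ (S : Set E))) :
    LowerSemicontinuousOn f (convexHull ℝ (S : Set E)) := by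
  intro p hp a ha
  obtain ⟨C, hC⟩ := hf.exists_sub_mul_norm_le_convexHull hbdd hp
  have hlim :
      Tendsto (fun x => f p - C * ‖x - p‖) (𝓝[convexHull ℝ (S : Set E)] p) (𝓝 (f p)) := by
    have hcont : Continuous fun x : E => f p - C * ‖x - p‖ := by fun_prop
    simpa using (hcont.tendsto p).mono_left nhdsWithin_le_nhds
  filter_upwards [hlim.eventually_const_lt ha, self_mem_nhdsWithin] with x hx hxS
  exact hx.trans_le (hC x hxS)

end Normed

theorem stmt_16_general (n : ℕ) (S : Finset (Fin n → ℝ)) (Δ : Set (Fin n → ℝ))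
    (hΔ : Δ = convexHull ℝ (S : Set (Fin n → ℝ))) :
    (∀ f : (Fin n → ℝ) → ℝ, BddAbove (f '' Δ) → BddBelow (f '' Δ) →
      ConcaveOn ℝ Δ f → UpperSemicontinuousOn f Δ → ContinuousOn f Δ) ∧
    (∀ p ∈ Δ, ∃ C : Set (Fin n → ℝ), IsClosed C ∧ Convex ℝ C ∧
      (∀ x ∈ C, ∀ r : ℝ, 0 ≤ r → p + r • (x - p) ∈ C) ∧
      ∃ U ∈ nhds p, Δ ∩ U = C ∩ U) := by
  subst hΔ
  refine ⟨fun f _ hbdd hf husc => continuousOn_iff_lower_upperSemicontinuousOn.2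
    ⟨hf.lowerSemicontinuousOn_convexHull hbdd, husc⟩, fun p hp => ?_⟩
  obtain ⟨r, hr, hball⟩ := exists_convexHull_inter_ball_eq_coneAt_inter_ball S hp
  exact ⟨coneAt _ p, isClosed_coneAt_convexHull S hp, (convex_convexHull ℝ _).convex_coneAt hp,
    fun x hx c hc => add_smul_sub_mem_coneAt hx hc, ball p r, ball_mem_nhds p hr, hball⟩

/-- every bounded concave upper-semicontinuous function on a polytope
`Δ = conv(S) ⊂ ℝⁿ` (with nonempty interior) is continuous on all of `Δ`, including at
boundary points; equivalently, a polytope is conical at each of its points. -/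
theorem stmt_16 (n : ℕ) (S : Finset (Fin n → ℝ)) (Δ : Set (Fin n → ℝ))
    (hΔ : Δ = convexHull ℝ (S : Set (Fin n → ℝ))) (hint : (interior Δ).Nonempty) :
    (∀ f : (Fin n → ℝ) → ℝ, BddAbove (f '' Δ) → BddBelow (f '' Δ) →
      ConcaveOn ℝ Δ f → UpperSemicontinuousOn f Δ → ContinuousOn f Δ) ∧
    (∀ p ∈ Δ, ∃ C : Set (Fin n → ℝ), IsClosed C ∧ Convex ℝ C ∧
      (∀ x ∈ C, ∀ r : ℝ, 0 ≤ r → p + r • (x - p) ∈ C) ∧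
      ∃ U ∈ nhds p, Δ ∩ U = C ∩ U) :=
  stmt_16_general n S Δ hΔ
end

section
/- Let Y ⊂ X be smooth projective varieties such that the restriction map N¹(X) → N¹(Y) on numerical divisor class groups is injective. Let D be an effective divisor on X not containing Y in its support such that D|_Y = E₁ + E₂ with E₁, E₂ prime divisors on Y and the class [E₁] ∈ N¹(Y) not in the image of N¹(X). Then D is a prime divisor. -/
/-- irreducibility criterion: effective divisors on `X` (resp. `Y`) are
modelled as finitely supported ℕ-valued functions on the sets `ιX` (resp. `ιY`) of prime
divisors; `res` is restriction to `Y` (additive), `clsX`, `clsY` the numerical class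
maps and `rmap : N¹(X) → N¹(Y)` the injective restriction on numerical classes, with
`clsY ∘ res = rmap ∘ clsX`. On the projective `X` every nonzero effective divisor has
nonzero class. If `res D = E₁ + E₂` with `E₁, E₂` prime and `[E₁]` not in the image of
`rmap`, then `D` is prime, i.e. not a sum of two nonzero effective divisors. -/
theorem stmt_17 {ιX ιY NX NY : Type*} [AddCommGroup NX] [AddCommGroup NY]
    (res : (ιX →₀ ℕ) →+ (ιY →₀ ℕ))
    (clsX : (ιX →₀ ℕ) →+ NX) (clsY : (ιY →₀ ℕ) →+ NY)
    (rmap : NX →+ NY) (hrinj : Function.Injective rmap)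
    (hcomm : ∀ d : ιX →₀ ℕ, clsY (res d) = rmap (clsX d))
    (hXproj : ∀ d : ιX →₀ ℕ, d ≠ 0 → clsX d ≠ 0)
    (D : ιX →₀ ℕ) (e₁ e₂ : ιY)
    (hDres : res D = Finsupp.single e₁ 1 + Finsupp.single e₂ 1)
    (hE1 : clsY (Finsupp.single e₁ 1) ∉ Set.range rmap) :
    ¬ ∃ D' D'' : ιX →₀ ℕ, D' ≠ 0 ∧ D'' ≠ 0 ∧ D = D' + D'' := by
  rintro ⟨D', D'', hD', hD'', rfl⟩
  have key : ∀ d : ιX →₀ ℕ, d ≠ 0 → res d ≠ 0 := by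
    intro d hd h0
    have h := hcomm d
    rw [h0, map_zero] at h
    exact hXproj d hd (hrinj (by simpa using h.symm))
  have keyE : ∀ d : ιX →₀ ℕ, res d ≠ Finsupp.single e₁ 1 := by
    intro d h
    exact hE1 ⟨clsX d, by rw [← hcomm d, h]⟩
  set a := res D' with ha
  set b := res D'' with hb
  have hab : a + b = Finsupp.single e₁ 1 + Finsupp.single e₂ 1 := by
    rw [ha, hb, ← map_add]; exact hDres
  have ha0 : a ≠ 0 := key D' hD'
  have hb0 : b ≠ 0 := key D'' hD''
  have hae : a ≠ Finsupp.single e₁ 1 := keyE D'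
  have hbe : b ≠ Finsupp.single e₁ 1 := keyE D''
  have hpt : ∀ y, a y + b y = (Finsupp.single e₁ 1) y + (Finsupp.single e₂ 1) y := by
    intro y; exact congrArg (fun f => f y) hab
  by_cases h12 : e₁ = e₂
  · subst h12
    have hz : ∀ y, y ≠ e₁ → a y = 0 ∧ b y = 0 := by
      intro y hy
      have h := hpt y
      simp [Finsupp.single_apply, Ne.symm hy] at h
      omega
    have h1 := hpt e₁
    simp [Finsupp.single_apply] at h1
    have hcase : a e₁ = 0 ∨ a e₁ = 1 ∨ a e₁ = 2 := by omega
    rcases hcase with h | h | h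
    · apply ha0
      ext y
      by_cases hy : y = e₁
      · rw [hy]; simpa using h
      · simpa using (hz y hy).1
    · apply hae
      ext y
      by_cases hy : y = e₁
      · rw [hy]; simp [Finsupp.single_apply, h]
      · simp [Finsupp.single_apply, Ne.symm hy, (hz y hy).1]
    · apply hb0
      ext y
      by_cases hy : y = e₁
      · rw [hy]
        have hbz : b e₁ = 0 := by omega
        simpa using hbz
      · simpa using (hz y hy).2
  · have hz : ∀ y, y ≠ e₁ → y ≠ e₂ → a y = 0 ∧ b y = 0 := by
      intro y hy1 hy2
      have h := hpt y
      simp [Finsupp.single_apply, Ne.symm hy1, Ne.symm hy2] at h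
      omega
    have h1 := hpt e₁
    have h2 := hpt e₂
    simp [Finsupp.single_apply, h12, Ne.symm h12] at h1 h2
    have hcase : (a e₁ = 0 ∧ a e₂ = 0) ∨ (a e₁ = 1 ∧ a e₂ = 1) ∨
        (a e₁ = 1 ∧ a e₂ = 0) ∨ (a e₁ = 0 ∧ a e₂ = 1) := by omega
    rcases hcase with ⟨u, v⟩ | ⟨u, v⟩ | ⟨u, v⟩ | ⟨u, v⟩
    · apply ha0
      ext y
      by_cases hy1 : y = e₁
      · rw [hy1]; simpa using u
      by_cases hy2 : y = e₂
      · rw [hy2]; simpa using v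
      · simpa using (hz y hy1 hy2).1
    · apply hb0
      ext y
      by_cases hy1 : y = e₁
      · rw [hy1]
        have hbz : b e₁ = 0 := by omega
        simpa using hbz
      by_cases hy2 : y = e₂
      · rw [hy2]
        have hbz : b e₂ = 0 := by omega
        simpa using hbz
      · simpa using (hz y hy1 hy2).2
    · apply hae
      ext y
      by_cases hy1 : y = e₁
      · rw [hy1]; simp [Finsupp.single_apply, u]
      by_cases hy2 : y = e₂
      · rw [hy2]; simp [Finsupp.single_apply, h12, v]
      · simp [Finsupp.single_apply, Ne.symm hy1, (hz y hy1 hy2).1]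
    · apply hbe
      ext y
      by_cases hy1 : y = e₁
      · rw [hy1]
        have hb1 : b e₁ = 1 := by omega
        simp [Finsupp.single_apply, hb1]
      by_cases hy2 : y = e₂
      · rw [hy2]
        have hbz : b e₂ = 0 := by omega
        simp [Finsupp.single_apply, h12, hbz]
      · simp [Finsupp.single_apply, Ne.symm hy1, (hz y hy1 hy2).2]
end

section
/- Let D be a big prime divisor on a normal projective variety X, with Okounkov body Δ(D) ⊂ ℝⁿ with respect to a fixed flag, and set p = ν(D) ∈ Δ(D) (the image of the canonical section of D under the flag valuation). Then for every t ∈ [0,1], the Okounkov body of the filtered algebra satisfies Δ^t(D) = t·p + (1−t)·Δ(D); consequently a_max(‖D‖, ord_D) = 1 and the concave transform G_{D, ord_D} equals the extremal function E_{Δ(D), p}. In particular, G_{D, ord_D} is continuous at p if and only if Δ(D) is conical at p. -/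
/-!
Twisting by the canonical section of `mD` gives `F k m = m • p + A (k - m)`, so after rescaling
by `1 / k` the filtered body at level `t` is spanned by the points `s • p + (1 - s) • y` with
`y ∈ Δ` and `s = ⌈k t⌉ / k ≥ t`. Since `Δ` is convex and contains `p`, these lie in
`t • p + (1 - t) • Δ`, and letting `s` decrease to `t` gives the reverse inclusion; hence the
concave transform and the extremal function are suprema of the same sets.

For the last claim: `E > 1 / 2` near `p` means that `Δ` contains the double `p + 2 • (x - p)` of
every nearby point `x`, and iterating this fills the cone spanned by `Δ` near `p`. Conversely, if
`Δ` is locally a cone, pushing `x` out along the ray from `p` to a fixed distance stays in `Δ`,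
which gives `E x ≥ 1 - O(‖x - p‖)`.
-/

open Pointwise Filter Topology Set

variable {V : Type*} [NormedAddCommGroup V] [NormedSpace ℝ V]

def okounkovBody (A : ℕ → Set V) : Set V :=
  closure (⋃ k ∈ {k : ℕ | 1 ≤ k}, ((k : ℝ)⁻¹) • A k)

def ordFiltration (A : ℕ → Set V) (p : V) (k m : ℕ) : Set V :=
  if m ≤ k then (fun x => (m : ℝ) • p + x) '' A (k - m) else ∅

noncomputable def concaveTransform (Δt : ℝ → Set V) (x : V) : ℝ :=
  sSup {t : ℝ | 0 ≤ t ∧ x ∈ Δt t}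

noncomputable def extremalFunction (Δ : Set V) (p x : V) : ℝ :=
  sSup {t : ℝ | t ∈ Icc (0 : ℝ) 1 ∧ ∃ y ∈ Δ, x = t • p + (1 - t) • y}

def IsConicalAt (Δ : Set V) (p : V) : Prop :=
  ∃ C : Set V, IsClosed C ∧ Convex ℝ C ∧ (∀ x ∈ C, ∀ r : ℝ, 0 ≤ r → p + r • (x - p) ∈ C) ∧
    ∃ U ∈ 𝓝 p, Δ ∩ U = C ∩ U

section Convex

variable {Δ : Set V} {p : V}

theorem Convex.image_smul_add_one_sub_smul_subset (hΔ : Convex ℝ Δ) (hp : p ∈ Δ) {s t : ℝ}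
    (hts : t ≤ s) (hs : s ≤ 1) :
    (fun y => s • p + (1 - s) • y) '' Δ ⊆ (fun y => t • p + (1 - t) • y) '' Δ := by
  rintro _ ⟨y, hy, rfl⟩
  rcases hs.eq_or_lt with rfl | hs
  · exact ⟨p, hp, by simp only [sub_self, zero_smul, add_zero]; module⟩
  have ht : 0 < 1 - t := by linarith
  refine ⟨((s - t) / (1 - t)) • p + ((1 - s) / (1 - t)) • y,
    hΔ hp hy (div_nonneg (by linarith) ht.le) (div_nonneg (by linarith) ht.le)
      (by field_simp; ring), ?_⟩
  match_scalars
  · field_simp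
    ring
  · field_simp

theorem extremalFunction_le_one (x : V) : extremalFunction Δ p x ≤ 1 :=
  Real.sSup_le (fun _ ht => ht.1.2) zero_le_one

theorem le_extremalFunction {s : ℝ} (hs : s ∈ Icc (0 : ℝ) 1) {y : V} (hy : y ∈ Δ) :
    s ≤ extremalFunction Δ p (s • p + (1 - s) • y) :=
  le_csSup ⟨1, fun _ ht => ht.1.2⟩ ⟨hs, y, hy, rfl⟩

theorem extremalFunction_self (hp : p ∈ Δ) : extremalFunction Δ p p = 1 :=
  (extremalFunction_le_one p).antisymm <| by
    simpa using le_extremalFunction (p := p) ⟨zero_le_one, le_rfl⟩ hp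

theorem two_smul_sub_mem_of_half_lt_extremalFunction (hΔ : Convex ℝ Δ) (hp : p ∈ Δ) {x : V}
    (hx : x ∈ Δ) (h : 1 / 2 < extremalFunction Δ p x) : p + (2 : ℝ) • (x - p) ∈ Δ := by
  rw [extremalFunction] at h
  obtain ⟨s, ⟨⟨-, hs1⟩, y, hy, rfl⟩, hs⟩ :=
    exists_lt_of_lt_csSup (by exact ⟨0, ⟨le_rfl, zero_le_one⟩, x, hx, by simp⟩) h
  convert hΔ.add_smul_sub_mem hp hy (t := 2 * (1 - s)) ⟨by linarith, by linarith⟩ using 1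
  module

/-- By induction on `N`: for `r ≤ 2 ^ N`, `p + r • (x - p)` is the double of
`p + (r / 2) • (x - p)`. -/
theorem Convex.add_smul_sub_mem_of_two_smul_sub_mem (hΔ : Convex ℝ Δ) (hp : p ∈ Δ) {δ : ℝ}
    (h2 : ∀ x ∈ Δ, dist x p < δ → p + (2 : ℝ) • (x - p) ∈ Δ) {x : V} (hx : x ∈ Δ) {r : ℝ}
    (hr : 0 ≤ r) (hδ : dist (p + r • (x - p)) p < δ) : p + r • (x - p) ∈ Δ := by
  suffices H : ∀ N : ℕ, ∀ r : ℝ, 0 ≤ r → r ≤ 2 ^ N → dist (p + r • (x - p)) p < δ →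
      p + r • (x - p) ∈ Δ by
    obtain ⟨N, hN⟩ := pow_unbounded_of_one_lt r (one_lt_two : (1 : ℝ) < 2)
    exact H N r hr hN.le hδ
  intro N
  induction N with
  | zero => exact fun r hr hr1 _ => hΔ.add_smul_sub_mem hp hx ⟨hr, by simpa using hr1⟩
  | succ N ih =>
    intro r hr hrN hδ
    simp only [dist_self_add_left, norm_smul, Real.norm_of_nonneg hr] at hδ
    have hhalf : dist (p + (r / 2) • (x - p)) p < δ := by
      rw [dist_self_add_left, norm_smul, Real.norm_of_nonneg (by positivity)]
      nlinarith [norm_nonneg (x - p)]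
    convert h2 _ (ih (r / 2) (by positivity) (by rw [pow_succ] at hrN; linarith) hhalf) hhalf
      using 1
    module

theorem IsClosed.isConicalAt_of_two_smul_sub_mem (hΔc : IsClosed Δ) (hΔ : Convex ℝ Δ)
    (hp : p ∈ Δ) {δ : ℝ} (hδ : 0 < δ)
    (h2 : ∀ x ∈ Δ, dist x p < δ → p + (2 : ℝ) • (x - p) ∈ Δ) : IsConicalAt Δ p := by
  set K := ConvexCone.hull ℝ (-p +ᵥ Δ)
  have hmemK : ∀ x ∈ Δ, -p + x ∈ K := fun x hx =>
    ConvexCone.subset_hull (vadd_mem_vadd_set hx)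
  have hK : ∀ v ∈ K, ∃ x ∈ Δ, ∃ r : ℝ, 0 < r ∧ v = r • (x - p) := by
    intro v hv
    obtain ⟨r, hr, _, ⟨x, hx, rfl⟩, rfl⟩ := (ConvexCone.mem_hull_of_convex (hΔ.vadd (-p))).mp hv
    exact ⟨x, hx, r, hr, by simp only [vadd_eq_add, neg_add_eq_sub]⟩
  have hcone : ∀ r : ℝ, 0 ≤ r →
      MapsTo (fun w => p + r • (w - p)) (p +ᵥ (K : Set V)) (p +ᵥ (K : Set V)) := by
    rintro r hr _ ⟨v, hv, rfl⟩
    refine ⟨r • v, ?_, by simp [vadd_eq_add]⟩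
    rcases hr.eq_or_lt with rfl | hr
    · simpa using hmemK p hp
    · exact K.smul_mem hr hv
  refine ⟨closure (p +ᵥ (K : Set V)), isClosed_closure, (K.convex.vadd p).closure,
    fun x hx r hr => map_mem_closure (f := fun w => p + r • (w - p)) (by fun_prop) hx (hcone r hr),
    Metric.ball p δ, Metric.ball_mem_nhds p hδ, ?_⟩
  refine Subset.antisymm
    (fun x ⟨hx, hxδ⟩ => ⟨subset_closure ⟨-p + x, hmemK x hx, by simp⟩, hxδ⟩)
    fun x ⟨hx, hxδ⟩ => ⟨?_, hxδ⟩
  have hsub : Metric.ball p δ ∩ (p +ᵥ (K : Set V)) ⊆ Δ := by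
    rintro _ ⟨hwδ, v, hv, rfl⟩
    obtain ⟨y, hy, r, hr, rfl⟩ := hK v hv
    exact hΔ.add_smul_sub_mem_of_two_smul_sub_mem hp h2 hy hr.le hwδ
  exact hΔc.closure_subset_iff.mpr hsub (Metric.isOpen_ball.inter_closure ⟨hxδ, hx⟩)

theorem IsConicalAt.continuousWithinAt_extremalFunction (h : IsConicalAt Δ p) (hp : p ∈ Δ) :
    ContinuousWithinAt (extremalFunction Δ p) Δ p := by
  obtain ⟨C, -, -, hcone, U, hU, hΔU⟩ := h
  obtain ⟨ρ, hρ, hball⟩ := Metric.mem_nhds_iff.mp hU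
  have hlow : ∀ x ∈ Δ, dist x p < ρ / 2 → 1 - 2 * dist x p / ρ ≤ extremalFunction Δ p x := by
    intro x hx hxρ
    rcases eq_or_ne x p with rfl | hxp
    · rw [extremalFunction_self hp, dist_self]
      simp
    have hd : 0 < dist x p := dist_pos.mpr hxp
    set c := ρ / (2 * dist x p)
    have hc : 1 < c := (one_lt_div (by positivity)).mpr (by linarith)
    have hxC : x ∈ C := (hΔU.subset ⟨hx, hball (Metric.mem_ball.mpr (by linarith))⟩).1
    have hyU : p + c • (x - p) ∈ U := hball <| by
      have : c * dist x p = ρ / 2 := by simp only [c]; field_simp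
      rw [Metric.mem_ball, dist_self_add_left, norm_smul, Real.norm_of_nonneg (by positivity),
        ← dist_eq_norm, this]
      linarith
    have hy : p + c • (x - p) ∈ Δ := (hΔU.symm.subset ⟨hcone x hxC c (by positivity), hyU⟩).1
    convert le_extremalFunction (p := p) ⟨sub_nonneg.mpr (inv_le_one_of_one_le₀ hc.le),
      sub_le_self _ (by positivity)⟩ hy using 2
    · simp only [c]
      field_simp
    · simp only [sub_sub_cancel]
      rw [smul_add, smul_smul, inv_mul_cancel₀ (by positivity)]
      module
  rw [ContinuousWithinAt, extremalFunction_self hp]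
  refine tendsto_of_tendsto_of_tendsto_of_le_of_le' (g := fun x => 1 - 2 * dist x p / ρ) ?_
    tendsto_const_nhds ?_ (Eventually.of_forall extremalFunction_le_one)
  · refine tendsto_nhdsWithin_of_tendsto_nhds ?_
    convert (show Continuous fun x => 1 - 2 * dist x p / ρ by fun_prop).tendsto p using 2
    simp
  · filter_upwards [self_mem_nhdsWithin,
      nhdsWithin_le_nhds (Metric.ball_mem_nhds p (half_pos hρ))] with x hx hxρ
    exact hlow x hx hxρ

theorem continuousWithinAt_extremalFunction_iff (hΔc : IsClosed Δ) (hΔ : Convex ℝ Δ)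
    (hp : p ∈ Δ) : ContinuousWithinAt (extremalFunction Δ p) Δ p ↔ IsConicalAt Δ p := by
  refine ⟨fun h => ?_, fun h => h.continuousWithinAt_extremalFunction hp⟩
  have hev : ∀ᶠ x in 𝓝[Δ] p, 1 / 2 < extremalFunction Δ p x :=
    h.eventually (eventually_gt_nhds (by rw [extremalFunction_self hp]; norm_num))
  obtain ⟨δ, hδ, hball⟩ := Metric.mem_nhdsWithin_iff.mp hev
  exact hΔc.isConicalAt_of_two_smul_sub_mem hΔ hp hδ fun x hx hxδ =>
    two_smul_sub_mem_of_half_lt_extremalFunction hΔ hp hx (hball ⟨hxδ, hx⟩)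

end Convex

section Superadditive

variable {A : ℕ → Set V} {p : V}

theorem inv_smul_mem_okounkovBody {k : ℕ} (hk : 1 ≤ k) {a : V} (ha : a ∈ A k) :
    (k : ℝ)⁻¹ • a ∈ okounkovBody A :=
  subset_closure (mem_biUnion hk (smul_mem_smul_set ha))

theorem natCast_smul_mem_of_superadditive (hadd : ∀ k l, A k + A l ⊆ A (k + l))
    (h0 : (0 : V) ∈ A 0) {l : ℕ} {a : V} (ha : a ∈ A l) (q : ℕ) : (q : ℝ) • a ∈ A (q * l) := by
  induction q with
  | zero => simpa using h0
  | succ q ih =>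
    rw [Nat.cast_succ, add_smul, one_smul, Nat.succ_mul]
    exact hadd _ _ (add_mem_add ih ha)

/-- A nonzero `a ∈ A 0` would make `x + m • a ∈ A 1` unbounded. -/
theorem eq_zero_of_mem_zero (hadd : ∀ k l, A k + A l ⊆ A (k + l))
    (hbdd : Bornology.IsBounded (okounkovBody A)) {x : V} (hx : x ∈ A 1) {a : V}
    (ha : a ∈ A 0) : a = 0 := by
  have hmem : ∀ m : ℕ, x + (m : ℝ) • a ∈ A 1 := by
    intro m
    induction m with
    | zero => simpa using hx
    | succ m ih =>
      rw [Nat.cast_succ, add_smul, one_smul, ← add_assoc]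
      exact hadd 1 0 (add_mem_add ih ha)
  obtain ⟨R, hR⟩ := isBounded_iff_forall_norm_le.mp hbdd
  have hle : ∀ m : ℕ, (m : ℝ) * ‖a‖ ≤ R + ‖x‖ := fun m => by
    have h1 := hR _ (by simpa using inv_smul_mem_okounkovBody le_rfl (hmem m))
    calc (m : ℝ) * ‖a‖ = ‖(x + (m : ℝ) • a) - x‖ := by simp [norm_smul]
      _ ≤ R + ‖x‖ := (norm_sub_le _ _).trans (by linarith)
  by_contra hne
  have hapos : 0 < ‖a‖ := norm_pos_iff.mpr hne
  obtain ⟨m, hm⟩ := exists_nat_gt ((R + ‖x‖) / ‖a‖)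
  rw [div_lt_iff₀ hapos] at hm
  linarith [hle m]

theorem ordFiltration_eq_empty {k m : ℕ} (h : k < m) : ordFiltration A p k m = ∅ :=
  if_neg (by omega)

theorem ordFiltration_anti (hadd : ∀ k l, A k + A l ⊆ A (k + l)) (h0 : (0 : V) ∈ A 0)
    (hp : p ∈ A 1) {k m m' : ℕ} (h : m' ≤ m) :
    ordFiltration A p k m ⊆ ordFiltration A p k m' := by
  unfold ordFiltration
  split_ifs with hm hm'
  · rintro _ ⟨a, ha, rfl⟩
    have hpm : ((m - m' : ℕ) : ℝ) • p ∈ A (m - m') := by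
      simpa using natCast_smul_mem_of_superadditive hadd h0 hp (m - m')
    refine ⟨((m - m' : ℕ) : ℝ) • p + a, ?_, ?_⟩
    · have := hadd _ _ (add_mem_add hpm ha)
      rwa [show m - m' + (k - m) = k - m' by omega] at this
    · rw [Nat.cast_sub h]
      module
  · omega
  · exact empty_subset _
  · exact empty_subset _

theorem smul_add_one_sub_smul_mem_ordFiltration (hadd : ∀ k l, A k + A l ⊆ A (k + l))
    (h0 : (0 : V) ∈ A 0) (hp : p ∈ A 1) {l N j : ℕ} (hl : 1 ≤ l) (hN : 1 ≤ N) (hjN : j ≤ N)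
    {t : ℝ} (ht : t * N ≤ j) {a : V} (ha : a ∈ A l) :
    ((j : ℝ) / N) • p + (1 - (j : ℝ) / N) • ((l : ℝ)⁻¹ • a) ∈
      ((l * N : ℕ) : ℝ)⁻¹ • ordFiltration A p (l * N) ⌈((l * N : ℕ) : ℝ) * t⌉₊ := by
  have hceil : ⌈((l * N : ℕ) : ℝ) * t⌉₊ ≤ l * j := Nat.ceil_le.mpr (by
    push_cast
    nlinarith [(Nat.one_le_cast (α := ℝ)).mpr hl])
  have hmem :
      ((l * j : ℕ) : ℝ) • p + ((N - j : ℕ) : ℝ) • a ∈ ordFiltration A p (l * N) (l * j) := by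
    rw [ordFiltration, if_pos (Nat.mul_le_mul_left l hjN)]
    refine ⟨_, ?_, rfl⟩
    rw [show l * N - l * j = (N - j) * l by rw [← Nat.mul_sub, Nat.mul_comm]]
    exact natCast_smul_mem_of_superadditive hadd h0 ha _
  convert smul_mem_smul_set (ordFiltration_anti hadd h0 hp hceil hmem) using 1
  have hl' : (l : ℝ) ≠ 0 := by positivity
  have hN' : (N : ℝ) ≠ 0 := by positivity
  rw [Nat.cast_sub hjN]
  push_cast
  match_scalars <;> field_simp

theorem image_okounkovBody_subset_okounkovBody_ordFiltration
    (hadd : ∀ k l, A k + A l ⊆ A (k + l)) (h0 : (0 : V) ∈ A 0) (hp : p ∈ A 1) {t : ℝ}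
    (ht : t ∈ Icc (0 : ℝ) 1) :
    (fun y => t • p + (1 - t) • y) '' okounkovBody A ⊆
      okounkovBody (fun k => ordFiltration A p k ⌈(k : ℝ) * t⌉₊) := by
  have hcont : Continuous fun y : V => t • p + (1 - t) • y := by fun_prop
  refine (image_closure_subset_closure_image hcont).trans
    (closure_minimal ?_ isClosed_closure)
  simp only [image_subset_iff, iUnion_subset_iff]
  rintro l hl _ ⟨a, ha, rfl⟩
  have hs : Tendsto (fun N : ℕ => (⌈t * N⌉₊ : ℝ) / N) atTop (𝓝 t) :=
    (tendsto_nat_ceil_mul_div_atTop ht.1).comp tendsto_natCast_atTop_atTop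
  refine mem_closure_of_tendsto
    (((hs.smul_const p).add ((tendsto_const_nhds.sub hs).smul_const ((l : ℝ)⁻¹ • a))))
    (eventually_atTop.mpr ⟨1, fun N hN => ?_⟩)
  have hjN : ⌈t * N⌉₊ ≤ N :=
    Nat.ceil_le.mpr (by nlinarith [ht.2, (N.cast_nonneg : (0 : ℝ) ≤ N)])
  exact mem_biUnion (Nat.mul_le_mul hl hN : 1 * 1 ≤ l * N)
    (smul_add_one_sub_smul_mem_ordFiltration hadd h0 hp hl hN hjN (Nat.le_ceil _) ha)

theorem okounkovBody_ordFiltration_subset_image (hadd : ∀ k l, A k + A l ⊆ A (k + l))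
    (hp : p ∈ A 1) (hconv : Convex ℝ (okounkovBody A)) (hcompact : IsCompact (okounkovBody A))
    {t : ℝ} (ht : t ≤ 1) :
    okounkovBody (fun k => ordFiltration A p k ⌈(k : ℝ) * t⌉₊) ⊆
      (fun y => t • p + (1 - t) • y) '' okounkovBody A := by
  refine closure_minimal ?_ (hcompact.image (by fun_prop)).isClosed
  simp only [iUnion_subset_iff]
  rintro k (hk : 1 ≤ k) _ ⟨z, hz, rfl⟩
  set m := ⌈(k : ℝ) * t⌉₊
  have hk' : (0 : ℝ) < k := by exact_mod_cast hk
  have hmk : m ≤ k := Nat.ceil_le.mpr (by nlinarith)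
  rw [ordFiltration, if_pos hmk] at hz
  obtain ⟨a, ha, rfl⟩ := hz
  have hpΔ : p ∈ okounkovBody A := by simpa using inv_smul_mem_okounkovBody le_rfl hp
  have hy : ∃ y ∈ okounkovBody A,
      (k : ℝ)⁻¹ • ((m : ℝ) • p + a) = ((m : ℝ) / k) • p + (1 - (m : ℝ) / k) • y := by
    rcases hmk.eq_or_lt with hmk | hmk
    · have ha0 : a = 0 :=
        eq_zero_of_mem_zero hadd hcompact.isBounded hp (by rwa [hmk, Nat.sub_self] at ha)
      refine ⟨p, hpΔ, ?_⟩
      rw [ha0, hmk]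
      simp [hk'.ne']
    · refine ⟨((k - m : ℕ) : ℝ)⁻¹ • a, inv_smul_mem_okounkovBody (by omega) ha, ?_⟩
      have hkm : (k : ℝ) - m ≠ 0 := sub_ne_zero.mpr (by exact_mod_cast hmk.ne')
      rw [Nat.cast_sub hmk.le]
      match_scalars <;> field_simp
  obtain ⟨y, hyΔ, hxy⟩ := hy
  show (k : ℝ)⁻¹ • ((m : ℝ) • p + a) ∈ _
  rw [hxy]
  refine hconv.image_smul_add_one_sub_smul_subset hpΔ ?_ ?_ (mem_image_of_mem _ hyΔ)
  · rw [le_div_iff₀ hk', mul_comm]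
    exact Nat.le_ceil _
  · rw [div_le_one hk']
    exact_mod_cast hmk

theorem okounkovBody_ordFiltration_eq (hadd : ∀ k l, A k + A l ⊆ A (k + l)) (h0 : (0 : V) ∈ A 0)
    (hp : p ∈ A 1) (hconv : Convex ℝ (okounkovBody A)) (hcompact : IsCompact (okounkovBody A))
    {t : ℝ} (ht : t ∈ Icc (0 : ℝ) 1) :
    okounkovBody (fun k => ordFiltration A p k ⌈(k : ℝ) * t⌉₊) =
      (fun y => t • p + (1 - t) • y) '' okounkovBody A :=
  (okounkovBody_ordFiltration_subset_image hadd hp hconv hcompact ht.2).antisymm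
    (image_okounkovBody_subset_okounkovBody_ordFiltration hadd h0 hp ht)

theorem okounkovBody_ordFiltration_eq_empty {t : ℝ} (ht : 1 < t) :
    okounkovBody (fun k => ordFiltration A p k ⌈(k : ℝ) * t⌉₊) = ∅ := by
  rw [okounkovBody, closure_empty_iff]
  refine iUnion_eq_empty.mpr fun k => iUnion_eq_empty.mpr fun (hk : 1 ≤ k) => ?_
  have hk' : (1 : ℝ) ≤ k := by exact_mod_cast hk
  rw [ordFiltration_eq_empty (Nat.lt_ceil.mpr (by nlinarith)), smul_set_empty]

theorem sSup_div_of_ordFiltration_nonempty_eq_one (h0 : (0 : V) ∈ A 0) {k : ℕ} (hk : 1 ≤ k) :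
    sSup {r : ℝ | ∃ m : ℕ, (ordFiltration A p k m).Nonempty ∧ r = (m : ℝ) / k} = 1 := by
  have hk' : (0 : ℝ) < k := by exact_mod_cast hk
  refine IsGreatest.csSup_eq ⟨⟨k, ?_, (div_self hk'.ne').symm⟩, ?_⟩
  · rw [ordFiltration, if_pos le_rfl, Nat.sub_self]
    exact ⟨_, mem_image_of_mem _ h0⟩
  · rintro _ ⟨m, hne, rfl⟩
    rw [div_le_one hk']
    by_contra! hkm
    simp [ordFiltration_eq_empty (by exact_mod_cast hkm : k < m)] at hne

theorem concaveTransform_ordFiltration_eq_extremalFunction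
    (hadd : ∀ k l, A k + A l ⊆ A (k + l)) (h0 : (0 : V) ∈ A 0) (hp : p ∈ A 1)
    (hconv : Convex ℝ (okounkovBody A)) (hcompact : IsCompact (okounkovBody A)) :
    concaveTransform (fun t => okounkovBody (fun k => ordFiltration A p k ⌈(k : ℝ) * t⌉₊)) =
      extremalFunction (okounkovBody A) p := by
  ext x
  refine congrArg sSup (Set.ext fun t => ?_)
  simp only [mem_ofPred_eq]
  refine ⟨fun ⟨ht0, hx⟩ => ?_, fun ⟨ht, y, hy, hxy⟩ => ?_⟩
  · have ht1 : t ≤ 1 := by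
      by_contra! ht1
      rw [okounkovBody_ordFiltration_eq_empty ht1] at hx
      exact hx
    rw [okounkovBody_ordFiltration_eq hadd h0 hp hconv hcompact ⟨ht0, ht1⟩] at hx
    obtain ⟨y, hy, rfl⟩ := hx
    exact ⟨⟨ht0, ht1⟩, y, hy, rfl⟩
  · refine ⟨ht.1, ?_⟩
    rw [okounkovBody_ordFiltration_eq hadd h0 hp hconv hcompact ht]
    exact ⟨y, hy, hxy.symm⟩

end Superadditive

theorem stmt_19_general (n : ℕ) (A : ℕ → Set (Fin n → ℝ)) (pt : Fin n → ℝ)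
    (hadd : ∀ k l : ℕ, A k + A l ⊆ A (k + l))
    (h0 : (0 : Fin n → ℝ) ∈ A 0) (hpt : pt ∈ A 1)
    (F : ℕ → ℕ → Set (Fin n → ℝ))
    (hF : ∀ k m : ℕ, m ≤ k → F k m = (fun x => (m : ℝ) • pt + x) '' A (k - m))
    (hF' : ∀ k m : ℕ, k < m → F k m = ∅)
    (Δ : Set (Fin n → ℝ))
    (hΔ : Δ = closure (⋃ k ∈ {k : ℕ | 1 ≤ k}, ((k : ℝ)⁻¹) • A k))
    (hconv : Convex ℝ Δ) (hcompact : IsCompact Δ)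
    (Δt : ℝ → Set (Fin n → ℝ))
    (hΔt : ∀ t : ℝ, Δt t = closure (⋃ k ∈ {k : ℕ | 1 ≤ k},
      ((k : ℝ)⁻¹) • F k ⌈(k : ℝ) * t⌉₊))
    (G E : (Fin n → ℝ) → ℝ)
    (hG : ∀ x, G x = sSup {t : ℝ | 0 ≤ t ∧ x ∈ Δt t})
    (hE : ∀ x, E x = sSup {t : ℝ | t ∈ Set.Icc (0 : ℝ) 1 ∧
      ∃ y ∈ Δ, x = t • pt + (1 - t) • y}) :
    (∀ t ∈ Set.Icc (0 : ℝ) 1, Δt t = (fun y => t • pt + (1 - t) • y) '' Δ) ∧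
    (∀ k : ℕ, 1 ≤ k →
      sSup {r : ℝ | ∃ m : ℕ, (F k m).Nonempty ∧ r = (m : ℝ) / k} = 1) ∧
    (∀ x ∈ Δ, G x = E x) ∧
    (ContinuousWithinAt G Δ pt ↔ ∃ C : Set (Fin n → ℝ), IsClosed C ∧ Convex ℝ C ∧
      (∀ x ∈ C, ∀ r : ℝ, 0 ≤ r → pt + r • (x - pt) ∈ C) ∧
      ∃ U ∈ nhds pt, Δ ∩ U = C ∩ U) := by
  obtain rfl : F = ordFiltration A pt := by
    funext k m
    by_cases hm : m ≤ k
    · rw [hF k m hm, ordFiltration, if_pos hm]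
    · rw [hF' k m (by omega), ordFiltration_eq_empty (by omega)]
  obtain rfl : Δ = okounkovBody A := hΔ
  obtain rfl : G = concaveTransform Δt := funext hG
  obtain rfl : Δt = fun t => okounkovBody fun k => ordFiltration A pt k ⌈(k : ℝ) * t⌉₊ :=
    funext hΔt
  obtain rfl : E = extremalFunction (okounkovBody A) pt := funext hE
  have hptΔ : pt ∈ okounkovBody A := by simpa using inv_smul_mem_okounkovBody le_rfl hpt
  rw [concaveTransform_ordFiltration_eq_extremalFunction hadd h0 hpt hconv hcompact]
  exact ⟨fun t ht => okounkovBody_ordFiltration_eq hadd h0 hpt hconv hcompact ht,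
    fun k hk => sSup_div_of_ordFiltration_nonempty_eq_one h0 hk, fun x _ => rfl,
    continuousWithinAt_extremalFunction_iff hcompact.isClosed hconv hptΔ⟩

/-- Okounkov-body description of the filtration by `ord_D` for a big prime
divisor `D`. Here `A k ⊂ ℝⁿ` is the set of flag-valuation vectors `ν(s)` of nonzero
sections `s ∈ H⁰(kD)` (a superadditive family, containing `0` at level `0` and the
point `pt = ν(D)` at level `1`), and `F k m` the vectors coming from sections with
`ord_D(s) ≥ m`; the identification `F^m H⁰(kD) ≅ H⁰((k-m)D)` (twist by the canonical
section of `mD`) is `hF`. With `Δ = Δ(D)` the Okounkov body and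
`Δt t = Δ^t(D)` the bodies of the filtered subalgebras, we have
`Δ^t(D) = t·pt + (1-t)·Δ(D)` for `t ∈ [0,1]`; `a_max(kD, ord_D)/k = 1` for all `k`
(so `a_max(‖D‖, ord_D) = 1`); the concave transform `G = G_{D, ord_D}` equals the
extremal function `E = E_{Δ(D), pt}`; and `G` is continuous at `pt` iff `Δ(D)` is
conical at `pt`. -/
theorem stmt_19 (n : ℕ) (A : ℕ → Set (Fin n → ℝ)) (pt : Fin n → ℝ)
    (hadd : ∀ k l : ℕ, A k + A l ⊆ A (k + l))
    (h0 : (0 : Fin n → ℝ) ∈ A 0) (hpt : pt ∈ A 1)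
    (hne : ∀ k : ℕ, 1 ≤ k → (A k).Nonempty)
    (F : ℕ → ℕ → Set (Fin n → ℝ))
    (hF : ∀ k m : ℕ, m ≤ k → F k m = (fun x => (m : ℝ) • pt + x) '' A (k - m))
    (hF' : ∀ k m : ℕ, k < m → F k m = ∅)
    (Δ : Set (Fin n → ℝ))
    (hΔ : Δ = closure (⋃ k ∈ {k : ℕ | 1 ≤ k}, ((k : ℝ)⁻¹) • A k))
    (hconv : Convex ℝ Δ) (hcompact : IsCompact Δ) (hint : (interior Δ).Nonempty)
    (Δt : ℝ → Set (Fin n → ℝ))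
    (hΔt : ∀ t : ℝ, Δt t = closure (⋃ k ∈ {k : ℕ | 1 ≤ k},
      ((k : ℝ)⁻¹) • F k ⌈(k : ℝ) * t⌉₊))
    (G E : (Fin n → ℝ) → ℝ)
    (hG : ∀ x, G x = sSup {t : ℝ | 0 ≤ t ∧ x ∈ Δt t})
    (hE : ∀ x, E x = sSup {t : ℝ | t ∈ Set.Icc (0 : ℝ) 1 ∧
      ∃ y ∈ Δ, x = t • pt + (1 - t) • y}) :
    (∀ t ∈ Set.Icc (0 : ℝ) 1, Δt t = (fun y => t • pt + (1 - t) • y) '' Δ) ∧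
    (∀ k : ℕ, 1 ≤ k →
      sSup {r : ℝ | ∃ m : ℕ, (F k m).Nonempty ∧ r = (m : ℝ) / k} = 1) ∧
    (∀ x ∈ Δ, G x = E x) ∧
    (ContinuousWithinAt G Δ pt ↔ ∃ C : Set (Fin n → ℝ), IsClosed C ∧ Convex ℝ C ∧
      (∀ x ∈ C, ∀ r : ℝ, 0 ≤ r → pt + r • (x - pt) ∈ C) ∧
      ∃ U ∈ nhds pt, Δ ∩ U = C ∩ U) :=
  stmt_19_general n A pt hadd h0 hpt F hF hF' Δ hΔ hconv hcompact Δt hΔt G E hG hE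
end
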